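/- arXiv:2406.09075 — 11 statements merged into one kernel-verified Lean document; each statement's English description precedes it below -/
import Mathlib

section
/- Let (A, B) be an α-valuation of the complete bipartite graph K_{a,b} with ab > 1, let x = max A, and let ℓ ≥ 2 be an integer such that x+1 ∈ B and x+ℓ+1 ∈ B. Then A contains no set of ℓ+1 consecutive integers; that is, no run of A has length greater than ℓ. -/
/-- An α-valuation of the complete bipartite graph `K_{a,b}`, identified with a pair
`(A, B)` of finite sets of nonnegative integers: `|A| = a`, `|B| = b`, every element of `A`
is strictly less than every element of `B`, and the `a*b` differences `y - z` with `y ∈ B`,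
`z ∈ A` are pairwise distinct and are exactly the integers `1, 2, ..., a*b`. -/
def IsAlphaValuation (a b : ℕ) (A B : Finset ℕ) : Prop :=
  0 < a ∧ 0 < b ∧ A.card = a ∧ B.card = b ∧
  (∀ z ∈ A, ∀ y ∈ B, z < y) ∧
  Set.InjOn (fun p : ℕ × ℕ => p.1 - p.2) ↑(B ×ˢ A) ∧
  (B ×ˢ A).image (fun p : ℕ × ℕ => p.1 - p.2) = Finset.Icc 1 (a * b)

theorem IsAlphaValuation.eq_zero_of_translate {a b : ℕ} {A B : Finset ℕ}
    (h : IsAlphaValuation a b A B) {y z d : ℕ} (hy : y ∈ B) (hyd : y + d ∈ B) (hz : z ∈ A)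
    (hzd : z + d ∈ A) : d = 0 := by
  obtain ⟨-, -, -, -, -, hinj, -⟩ := h
  have hpair : ((y, z) : ℕ × ℕ) = (y + d, z + d) :=
    hinj (by simp [hy, hz]) (by simp [hyd, hzd]) (Nat.add_sub_add_right y d z).symm
  simpa using congrArg Prod.fst hpair

theorem stmt_3_general (a b ℓ : ℕ) (A B : Finset ℕ) (h : IsAlphaValuation a b A B)
    (x : ℕ)
    (hℓ : 2 ≤ ℓ) (h1 : x + 1 ∈ B) (h2 : x + ℓ + 1 ∈ B) :
    ¬ ∃ c : ℕ, ∀ j : ℕ, j ≤ ℓ → c + j ∈ A := by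
  rintro ⟨c, hc⟩
  have hℓ0 : ℓ = 0 :=
    h.eq_zero_of_translate h1 (by rwa [add_right_comm] at h2) (hc 0 ℓ.zero_le) (hc ℓ le_rfl)
  omega

theorem stmt_3 (a b ℓ : ℕ) (A B : Finset ℕ) (h : IsAlphaValuation a b A B)
    (hab : 1 < a * b) (x : ℕ) (hxA : x ∈ A) (hxmax : ∀ z ∈ A, z ≤ x)
    (hℓ : 2 ≤ ℓ) (h1 : x + 1 ∈ B) (h2 : x + ℓ + 1 ∈ B) :
    ¬ ∃ c : ℕ, ∀ j : ℕ, j ≤ ℓ → c + j ∈ A :=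
  stmt_3_general a b ℓ A B h x hℓ h1 h2
end

section
/- Let (A, B) be an α-valuation of the complete bipartite graph K_{a,b} with ab > 1, let x = max A, and let ℓ ≥ 2 be an integer such that: x+1 ∈ B and x+ℓ+1 ∈ B; x+j ∉ B for 2 ≤ j ≤ ℓ; x−j ∈ A for 1 ≤ j ≤ ℓ−1; and x−ℓ ∉ A. Then every run of A has length exactly ℓ; that is, every element of A belongs to a set of exactly ℓ consecutive integers all contained in A whose predecessor and successor are not in A. -/
structure IsIntervalTiling (D E : Set ℕ) (N : ℕ) : Prop where
  add_lt : ∀ d ∈ D, ∀ e ∈ E, d + e < N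
  exists_add_eq : ∀ n < N, ∃ d ∈ D, ∃ e ∈ E, d + e = n
  eq_of_add_eq : ∀ d ∈ D, ∀ e ∈ E, ∀ d' ∈ D, ∀ e' ∈ E, d + e = d' + e' → d = d'

namespace IsIntervalTiling

variable {D E : Set ℕ} {N ℓ : ℕ}

theorem eq_zero_of_add_mem (ht : IsIntervalTiling D E N) (h0E : 0 ∈ E) {d e : ℕ}
    (hd : d ∈ D) (he : e ∈ E) (hde : d + e ∈ D) : e = 0 := by
  have := ht.eq_of_add_eq d hd e he (d + e) hde 0 h0E rfl
  omega

theorem add_notMem (ht : IsIntervalTiling D E N) (h0E : 0 ∈ E) (hℓ : 0 < ℓ) (hℓE : ℓ ∈ E)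
    {d : ℕ} (hd : d ∈ D) : d + ℓ ∉ D := fun hdℓ =>
  hℓ.ne' (ht.eq_zero_of_add_mem h0E hd hℓE hdℓ)

theorem succ_eq_of_succ_mem (ht : IsIntervalTiling D E N) (hℓ : 0 < ℓ) (hpred : ℓ - 1 ∈ D)
    (hℓE : ℓ ∈ E) {d : ℕ} (hd : d ∈ D) (hsucc : d + 1 ∈ E) : d + 1 = ℓ := by
  have := ht.eq_of_add_eq _ hpred _ hsucc _ hd _ hℓE (by omega)
  omega

theorem notMem_right_and_mem_iff (ht : IsIntervalTiling D E N) (h0E : 0 ∈ E) (hℓ : 0 < ℓ)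
    (hD : ∀ r < ℓ, r ∈ D) (hℓE : ℓ ∈ E) :
    ∀ k < N, 0 < k → ¬ ℓ ∣ k → k ∉ E ∧ (k ∈ D ↔ k - 1 ∈ D) := by
  intro k
  induction k using Nat.strong_induction_on with
  | _ k IH =>
    intro hkN hk0 hkℓ
    have shift : ∀ e ∈ E, 0 < e → e < k → (k - e ∈ D ↔ k - e - 1 ∈ D) := by
      intro e he he0 hek
      have hℓe : ℓ ∣ e := by
        by_contra hℓe
        exact (IH e hek (by omega) he0 hℓe).1 he
      have hℓke : ¬ ℓ ∣ k - e := fun hℓke =>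
        hkℓ (Nat.sub_add_cancel hek.le ▸ Nat.dvd_add hℓke hℓe)
      exact (IH (k - e) (by omega) (by omega) (by omega) hℓke).2
    have h0D : 0 ∈ D := hD 0 hℓ
    have hpred : ∀ d ∈ D, ∀ e ∈ E, d + e = k - 1 → 0 < e → k - e ∈ D := by
      intro d hd e he hde he0
      exact (shift e he he0 (by omega)).2 (by rwa [show k - e - 1 = d by omega])
    obtain ⟨d, hd, e, he, hde⟩ := ht.exists_add_eq (k - 1) (by omega)
    have hkE : k ∉ E := by
      intro hkE
      rcases Nat.eq_zero_or_pos e with rfl | he0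
      · have hdk : d + 1 = k := by omega
        have hdℓ := ht.succ_eq_of_succ_mem hℓ (hD _ (by omega)) hℓE hd (hdk ▸ hkE)
        exact hkℓ (by rw [← hdk, hdℓ])
      · have := ht.eq_of_add_eq _ (hpred d hd e he hde he0) e he 0 h0D k hkE (by omega)
        omega
    refine ⟨hkE, fun hkD => ?_, fun hkD => ?_⟩
    · rcases Nat.eq_zero_or_pos e with rfl | he0
      · rwa [← hde, add_zero]
      · have := ht.eq_of_add_eq _ (hpred d hd e he hde he0) e he k hkD 0 h0E (by omega)
        omega
    · obtain ⟨d', hd', e', he', hde'⟩ := ht.exists_add_eq k hkN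
      rcases Nat.eq_zero_or_pos e' with rfl | he0'
      · rwa [← hde', add_zero]
      rcases Nat.eq_zero_or_pos d' with rfl | hd0'
      · exact absurd (by rwa [← hde', zero_add]) hkE
      have hkeD : k - e' - 1 ∈ D :=
        (shift e' he' he0' (by omega)).1 (by rwa [show k - e' = d' by omega])
      have := ht.eq_of_add_eq _ hkeD e' he' _ hkD 0 h0E (by omega)
      omega

theorem mul_add_mem_iff (ht : IsIntervalTiling D E N) (h0E : 0 ∈ E) (hℓ : 0 < ℓ)
    (hD : ∀ r < ℓ, r ∈ D) (hℓE : ℓ ∈ E) (q : ℕ) {r : ℕ} (hr : r < ℓ) (hN : ℓ * q + r < N) :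
    ℓ * q + r ∈ D ↔ ℓ * q ∈ D := by
  induction r with
  | zero => rfl
  | succ r ih =>
    have hndvd : ¬ ℓ ∣ ℓ * q + (r + 1) := by
      rw [Nat.dvd_add_right (dvd_mul_right ℓ q)]
      exact Nat.not_dvd_of_pos_of_lt r.succ_pos hr
    rw [(ht.notMem_right_and_mem_iff h0E hℓ hD hℓE _ hN (by omega) hndvd).2]
    exact ih (by omega) (by omega)

theorem mul_div_add_mem (ht : IsIntervalTiling D E N) (h0E : 0 ∈ E) (hℓ : 0 < ℓ)
    (hD : ∀ r < ℓ, r ∈ D) (hℓE : ℓ ∈ E) {d : ℕ} (hd : d ∈ D) {r : ℕ} (hr : r < ℓ) :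
    ℓ * (d / ℓ) + r ∈ D := by
  have hdiv := Nat.div_add_mod d ℓ
  have hmod := Nat.mod_lt d hℓ
  have hdℓ := ht.add_lt d hd ℓ hℓE
  rw [ht.mul_add_mem_iff h0E hℓ hD hℓE _ hr (by omega),
    ← ht.mul_add_mem_iff h0E hℓ hD hℓE _ hmod (by omega), hdiv]
  exact hd

end IsIntervalTiling

theorem IsAlphaValuation.isIntervalTiling {a b : ℕ} {A B : Finset ℕ}
    (h : IsAlphaValuation a b A B) {x : ℕ} (hxA : x ∈ A) (hxmax : ∀ z ∈ A, z ≤ x) :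
    IsIntervalTiling {k | ∃ u ∈ A, u + k = x} {j | x + 1 + j ∈ B} (a * b) := by
  obtain ⟨-, -, -, -, hlt, hinj, himg⟩ := h
  refine ⟨?_, ?_, ?_⟩
  · rintro d ⟨u, hu, hud⟩ e he
    have hmem : x + 1 + e - u ∈ Finset.Icc 1 (a * b) := by
      rw [← himg]
      exact Finset.mem_image_of_mem _ (Finset.mem_product.2 ⟨he, hu⟩ : (x + 1 + e, u) ∈ B ×ˢ A)
    rw [Finset.mem_Icc] at hmem
    omega
  · intro n hn
    have hmem : n + 1 ∈ (B ×ˢ A).image (fun p : ℕ × ℕ => p.1 - p.2) := by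
      rw [himg, Finset.mem_Icc]
      omega
    obtain ⟨⟨y, u⟩, hyu, hdiff⟩ := Finset.mem_image.1 hmem
    rw [Finset.mem_product] at hyu
    have hxy := hlt x hxA y hyu.1
    have hux := hxmax u hyu.2
    refine ⟨x - u, ⟨u, hyu.2, by omega⟩, y - x - 1, ?_, by dsimp at hdiff; omega⟩
    show x + 1 + (y - x - 1) ∈ B
    rw [show x + 1 + (y - x - 1) = y by omega]
    exact hyu.1
  · rintro d ⟨u, hu, hud⟩ e he d' ⟨u', hu', hud'⟩ e' he' hsum
    have hmem : (x + 1 + e, u) ∈ B ×ˢ A := Finset.mem_product.2 ⟨he, hu⟩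
    have hmem' : (x + 1 + e', u') ∈ B ×ˢ A := Finset.mem_product.2 ⟨he', hu'⟩
    have hpair := hinj (Finset.mem_coe.2 hmem) (Finset.mem_coe.2 hmem')
      (show x + 1 + e - u = x + 1 + e' - u' by omega)
    rw [Prod.mk.injEq] at hpair
    omega

theorem stmt_4_general (a b ℓ : ℕ) (A B : Finset ℕ) (h : IsAlphaValuation a b A B)
    (x : ℕ) (hxA : x ∈ A) (hxmax : ∀ z ∈ A, z ≤ x)
    (hℓ : 2 ≤ ℓ)
    (h1 : x + 1 ∈ B) (h2 : x + ℓ + 1 ∈ B)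
    (h4 : ∀ j : ℕ, 1 ≤ j → j ≤ ℓ - 1 → ∃ z ∈ A, (z : ℤ) = (x : ℤ) - (j : ℤ)) :
    ∀ z ∈ A, ∃ c : ℕ, c ≤ z ∧ z < c + ℓ ∧
      (∀ j : ℕ, j < ℓ → c + j ∈ A) ∧ c + ℓ ∉ A ∧
      (∀ w ∈ A, (w : ℤ) ≠ (c : ℤ) - 1) := by
  have ht := h.isIntervalTiling hxA hxmax
  have hℓ0 : 0 < ℓ := by omega
  have h0E : x + 1 + 0 ∈ B := h1
  have hℓE : x + 1 + ℓ ∈ B := by rwa [add_right_comm]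
  have hD : ∀ r < ℓ, ∃ u ∈ A, u + r = x := by
    intro r hr
    rcases Nat.eq_zero_or_pos r with rfl | hr0
    · exact ⟨x, hxA, rfl⟩
    · obtain ⟨u, hu, hux⟩ := h4 r hr0 (by omega)
      exact ⟨u, hu, by omega⟩
  have hgap : ∀ u ∈ A, u + ℓ ∉ A := by
    intro u hu huℓ
    have huℓx := hxmax _ huℓ
    exact ht.add_notMem h0E hℓ0 hℓE (d := x - (u + ℓ)) ⟨u + ℓ, huℓ, by omega⟩ ⟨u, hu, by omega⟩
  intro z hz
  have hzx := hxmax z hz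
  have hblock : ∀ r < ℓ, ∃ u ∈ A, u + (ℓ * ((x - z) / ℓ) + r) = x := fun r hr =>
    ht.mul_div_add_mem h0E hℓ0 hD hℓE (d := x - z) ⟨z, hz, by omega⟩ hr
  have hdiv := Nat.div_add_mod (x - z) ℓ
  have hmod := Nat.mod_lt (x - z) hℓ0
  obtain ⟨c, hc, hcx⟩ := hblock (ℓ - 1) (by omega)
  refine ⟨c, by omega, by omega, fun j hj => ?_, hgap c hc, fun w hw hwc => ?_⟩
  · obtain ⟨u, hu, hux⟩ := hblock (ℓ - 1 - j) (by omega)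
    rwa [show c + j = u by omega]
  · obtain ⟨u, hu, hux⟩ := hblock 0 (by omega)
    exact hgap w hw (by rwa [show w + ℓ = u by omega])

theorem stmt_4 (a b ℓ : ℕ) (A B : Finset ℕ) (h : IsAlphaValuation a b A B)
    (hab : 1 < a * b) (x : ℕ) (hxA : x ∈ A) (hxmax : ∀ z ∈ A, z ≤ x)
    (hℓ : 2 ≤ ℓ)
    (h1 : x + 1 ∈ B) (h2 : x + ℓ + 1 ∈ B)
    (h3 : ∀ j : ℕ, 2 ≤ j → j ≤ ℓ → x + j ∉ B)
    (h4 : ∀ j : ℕ, 1 ≤ j → j ≤ ℓ - 1 → ∃ z ∈ A, (z : ℤ) = (x : ℤ) - (j : ℤ))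
    (h5 : ¬ ∃ z ∈ A, (z : ℤ) = (x : ℤ) - (ℓ : ℤ)) :
    ∀ z ∈ A, ∃ c : ℕ, c ≤ z ∧ z < c + ℓ ∧
      (∀ j : ℕ, j < ℓ → c + j ∈ A) ∧ c + ℓ ∉ A ∧
      (∀ w ∈ A, (w : ℤ) ≠ (c : ℤ) - 1) :=
  stmt_4_general a b ℓ A B h x hxA hxmax hℓ h1 h2 h4
end

section
/- Let (A, B) be an α-valuation of the complete bipartite graph K_{a,b} with ab > 1, let x = max A, and let ℓ ≥ 2 be an integer such that: x+1 ∈ B and x+ℓ+1 ∈ B; x+j ∉ B for 2 ≤ j ≤ ℓ; x−j ∈ A for 1 ≤ j ≤ ℓ−1; and x−ℓ ∉ A. Then for any two consecutive runs of A, if s is the smallest element of one run and s + d is the smallest element of the next run (the least run minimum exceeding s), then ℓ divides d. -/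
/-- `s` is the minimum of a run of `A`: `s ∈ A` and the predecessor `s - 1` (as an integer)
is not in `A`. -/
def IsRunMin (A : Finset ℕ) (s : ℕ) : Prop :=
  s ∈ A ∧ ∀ w ∈ A, (w : ℤ) ≠ (s : ℤ) - 1

structure IsRangeTiling (S O : Set ℕ) (N : ℕ) : Prop where
  add_lt : ∀ s ∈ S, ∀ o ∈ O, s + o < N
  exists_add_eq : ∀ k < N, ∃ s ∈ S, ∃ o ∈ O, s + o = k
  left_eq_of_add_eq : ∀ s ∈ S, ∀ o ∈ O, ∀ s' ∈ S, ∀ o' ∈ O, s + o = s' + o' → s = s'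

namespace IsRangeTiling

variable {S O : Set ℕ} {N ℓ n : ℕ}

theorem exists_succ_add_eq (ht : IsRangeTiling S O N) (hO : ∀ m < n, m ∈ O → ℓ ∣ m)
    (hS : ∀ m < n, m ∈ S → ¬ ℓ ∣ m + 1 → m + 1 ∈ S) (hn : n < N) (hn0 : n ≠ 0)
    (hdvd : ¬ ℓ ∣ n) : ∃ s ∈ S, s + 1 ∈ S ∧ ∃ o ∈ O, s + 1 + o = n := by
  obtain ⟨s, hs, o, ho, hso⟩ := ht.exists_add_eq (n - 1) (by omega)
  have hdo : ℓ ∣ o := hO o (by omega) ho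
  have hds : ¬ ℓ ∣ s + 1 := by
    rwa [show n = o + (s + 1) by omega, Nat.dvd_add_right hdo] at hdvd
  exact ⟨s, hs, hS s (by omega) hs hds, o, ho, by omega⟩

theorem dvd_of_mem_right (ht : IsRangeTiling S O N) (h0 : 0 ∈ S)
    (hO : ∀ m < n, m ∈ O → ℓ ∣ m) (hS : ∀ m < n, m ∈ S → ¬ ℓ ∣ m + 1 → m + 1 ∈ S)
    (hn : n ∈ O) : ℓ ∣ n := by
  by_contra hdvd
  have hn0 : n ≠ 0 := by rintro rfl; exact hdvd (dvd_zero ℓ)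
  obtain ⟨s, -, hs, o, ho, hso⟩ :=
    ht.exists_succ_add_eq hO hS (by simpa using ht.add_lt 0 h0 n hn) hn0 hdvd
  have := ht.left_eq_of_add_eq (s + 1) hs o ho 0 h0 n hn (by omega)
  omega

theorem pred_mem_left (ht : IsRangeTiling S O N) (h0 : 0 ∈ O)
    (hO : ∀ m < n, m ∈ O → ℓ ∣ m) (hS : ∀ m < n, m ∈ S → ¬ ℓ ∣ m + 1 → m + 1 ∈ S)
    (hn : n ∈ S) (hdvd : ¬ ℓ ∣ n) : n - 1 ∈ S := by
  have hn0 : n ≠ 0 := by rintro rfl; exact hdvd (dvd_zero ℓ)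
  obtain ⟨s, hs, hs1, o, ho, hso⟩ :=
    ht.exists_succ_add_eq hO hS (by simpa using ht.add_lt n hn 0 h0) hn0 hdvd
  have := ht.left_eq_of_add_eq (s + 1) hs1 o ho n hn 0 h0 (by omega)
  rwa [show n - 1 = s by omega]

theorem succ_mem_left (ht : IsRangeTiling S O N) (hS : ∀ j < ℓ, j ∈ S) (h0 : 0 ∈ O)
    (hℓ : ℓ ∈ O) (hℓ0 : 0 < ℓ) (hO : ∀ m ≤ n, m ∈ O → ℓ ∣ m)
    (hSpred : ∀ m < n, m ∈ S → ¬ ℓ ∣ m → m - 1 ∈ S) (hn : n ∈ S) (hdvd : ¬ ℓ ∣ n + 1) :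
    n + 1 ∈ S := by
  by_cases hsmall : n + 1 < ℓ
  · exact hS _ hsmall
  have hℓ1 : ℓ ≠ 1 := by rintro rfl; exact hdvd (one_dvd _)
  have hℓn : ℓ ≤ n := by
    rcases (not_lt.mp hsmall).lt_or_eq with h | h
    · omega
    · exact absurd (h ▸ dvd_refl ℓ) hdvd
  obtain ⟨s, hs, o, ho, hso⟩ := ht.exists_add_eq (n + 1) (by have := ht.add_lt n hn ℓ hℓ; omega)
  rcases Nat.eq_zero_or_pos o with rfl | ho0
  · simpa [← hso] using hs
  by_cases hon : o = n + 1
  · -- `n + ℓ = (ℓ - 1) + (n + 1)` would be two decompositions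
    have := ht.left_eq_of_add_eq n hn ℓ hℓ (ℓ - 1) (hS _ (by omega)) o ho (by omega)
    omega
  have hdo : ℓ ∣ o := hO o (by omega) ho
  have hℓo : ℓ ≤ o := Nat.le_of_dvd ho0 hdo
  have hds : ¬ ℓ ∣ s := by
    rwa [← hso, add_comm, Nat.dvd_add_right hdo] at hdvd
  have hs0 : s ≠ 0 := by rintro rfl; exact hds (dvd_zero ℓ)
  have := ht.left_eq_of_add_eq (s - 1) (hSpred s (by omega) hs hds) o ho n hn 0 h0 (by omega)
  omega

theorem dvd_and_pred_mem_and_succ_mem (ht : IsRangeTiling S O N) (hS : ∀ j < ℓ, j ∈ S)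
    (h0 : 0 ∈ O) (hℓ : ℓ ∈ O) (hℓ0 : 0 < ℓ) (n : ℕ) :
    (n ∈ O → ℓ ∣ n) ∧ (n ∈ S → ¬ ℓ ∣ n → n - 1 ∈ S) ∧
      (n ∈ S → ¬ ℓ ∣ n + 1 → n + 1 ∈ S) := by
  induction n using Nat.strong_induction_on with
  | _ n ih =>
    have hO : ∀ m < n, m ∈ O → ℓ ∣ m := fun m hm => (ih m hm).1
    have hSsucc : ∀ m < n, m ∈ S → ¬ ℓ ∣ m + 1 → m + 1 ∈ S := fun m hm => (ih m hm).2.2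
    have hdvd : n ∈ O → ℓ ∣ n := ht.dvd_of_mem_right (hS 0 hℓ0) hO hSsucc
    have hO' : ∀ m ≤ n, m ∈ O → ℓ ∣ m := fun m hm => by
      rcases hm.lt_or_eq with hm | rfl
      exacts [hO m hm, hdvd]
    exact ⟨hdvd, ht.pred_mem_left h0 hO hSsucc,
      ht.succ_mem_left hS h0 hℓ hℓ0 hO' fun m hm => (ih m hm).2.1⟩

theorem dvd_succ_of_mem_of_succ_notMem (ht : IsRangeTiling S O N) (hS : ∀ j < ℓ, j ∈ S)
    (h0 : 0 ∈ O) (hℓ : ℓ ∈ O) (hℓ0 : 0 < ℓ) (hn : n ∈ S) (hn1 : n + 1 ∉ S) : ℓ ∣ n + 1 :=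
  by_contra fun hdvd => hn1 ((ht.dvd_and_pred_mem_and_succ_mem hS h0 hℓ hℓ0 n).2.2 hn hdvd)

end IsRangeTiling

theorem IsAlphaValuation.isRangeTiling {a b x : ℕ} {A B : Finset ℕ}
    (h : IsAlphaValuation a b A B) (hxA : x ∈ A) (hxmax : ∀ z ∈ A, z ≤ x) :
    IsRangeTiling ((x - ·) '' A) {o | x + o + 1 ∈ B} (a * b) := by
  obtain ⟨-, -, -, -, hsep, hinj, himg⟩ := h
  have hdiff : ∀ y ∈ B, ∀ z ∈ A, y - z ∈ Finset.Icc 1 (a * b) := fun y hy z hz => by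
    rw [← himg]
    exact Finset.mem_image.2 ⟨(y, z), Finset.mem_product.2 ⟨hy, hz⟩, rfl⟩
  refine ⟨?_, ?_, ?_⟩
  · rintro _ ⟨z, hz, rfl⟩ o ho
    have := Finset.mem_Icc.1 (hdiff _ ho z hz)
    have := hxmax z hz
    dsimp only
    omega
  · intro k hk
    obtain ⟨⟨y, z⟩, hyz, hk⟩ := Finset.mem_image.1 (himg ▸ Finset.mem_Icc.2 ⟨by omega, hk⟩ :
      k + 1 ∈ (B ×ˢ A).image fun p : ℕ × ℕ => p.1 - p.2)
    obtain ⟨hy, hz⟩ := Finset.mem_product.1 hyz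
    have := hxmax z hz
    have := hsep x hxA y hy
    refine ⟨x - z, ⟨z, hz, rfl⟩, y - x - 1, ?_, by simp only at hk; omega⟩
    show x + (y - x - 1) + 1 ∈ B
    rwa [show x + (y - x - 1) + 1 = y by omega]
  · rintro _ ⟨z, hz, rfl⟩ o ho _ ⟨z', hz', rfl⟩ o' ho' hsum
    have := hxmax z hz
    have := hxmax z' hz'
    dsimp only at hsum ⊢
    have hmem : ∀ o ∈ {o | x + o + 1 ∈ B}, ∀ z ∈ A, (x + o + 1, z) ∈ (↑(B ×ˢ A) : Set (ℕ × ℕ)) :=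
      fun o ho z hz => Finset.mem_product.2 ⟨ho, hz⟩
    have hpair : (x + o + 1, z) = (x + o' + 1, z') :=
      hinj (hmem o ho z hz) (hmem o' ho' z' hz') (by dsimp only; omega)
    rw [Prod.ext_iff] at hpair
    omega

theorem IsRunMin.sub_add_one_notMem_image {A : Finset ℕ} {t x : ℕ} (ht : IsRunMin A t)
    (hxmax : ∀ z ∈ A, z ≤ x) : x - t + 1 ∉ (x - ·) '' (A : Set ℕ) := by
  rintro ⟨z, hz, hzt⟩
  have := hxmax z hz
  have := hxmax t ht.1
  exact ht.2 z hz (by simp only at hzt; omega)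

theorem stmt_5_general (a b ℓ : ℕ) (A B : Finset ℕ) (h : IsAlphaValuation a b A B)
    (x : ℕ) (hxA : x ∈ A) (hxmax : ∀ z ∈ A, z ≤ x)
    (hℓ : 2 ≤ ℓ)
    (h1 : x + 1 ∈ B) (h2 : x + ℓ + 1 ∈ B)
    (h4 : ∀ j : ℕ, 1 ≤ j → j ≤ ℓ - 1 → ∃ z ∈ A, (z : ℤ) = (x : ℤ) - (j : ℤ)) :
    ∀ s d : ℕ, 0 < d → IsRunMin A s → IsRunMin A (s + d) →
      (∀ t : ℕ, s < t → t < s + d → ¬ IsRunMin A t) →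
      ℓ ∣ d := by
  intro s d _ hs hsd _
  have hS : ∀ j < ℓ, j ∈ (x - ·) '' (A : Set ℕ) := by
    intro j hj
    rcases Nat.eq_zero_or_pos j with rfl | hj0
    · exact ⟨x, hxA, Nat.sub_self x⟩
    · obtain ⟨z, hz, hzj⟩ := h4 j hj0 (by omega)
      exact ⟨z, hz, by simp only; omega⟩
  have hrun : ∀ t, IsRunMin A t → ℓ ∣ x - t + 1 := fun t ht =>
    (h.isRangeTiling hxA hxmax).dvd_succ_of_mem_of_succ_notMem hS (by simpa using h1) h2
      (by omega) ⟨t, ht.1, rfl⟩ (ht.sub_add_one_notMem_image hxmax)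
  have hsdx := hxmax _ hsd.1
  have hds := hrun s hs
  rw [show x - s + 1 = x - (s + d) + 1 + d by omega] at hds
  exact (Nat.dvd_add_right (hrun _ hsd)).1 hds

theorem stmt_5 (a b ℓ : ℕ) (A B : Finset ℕ) (h : IsAlphaValuation a b A B)
    (hab : 1 < a * b) (x : ℕ) (hxA : x ∈ A) (hxmax : ∀ z ∈ A, z ≤ x)
    (hℓ : 2 ≤ ℓ)
    (h1 : x + 1 ∈ B) (h2 : x + ℓ + 1 ∈ B)
    (h3 : ∀ j : ℕ, 2 ≤ j → j ≤ ℓ → x + j ∉ B)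
    (h4 : ∀ j : ℕ, 1 ≤ j → j ≤ ℓ - 1 → ∃ z ∈ A, (z : ℤ) = (x : ℤ) - (j : ℤ))
    (h5 : ¬ ∃ z ∈ A, (z : ℤ) = (x : ℤ) - (ℓ : ℤ)) :
    ∀ s d : ℕ, 0 < d → IsRunMin A s → IsRunMin A (s + d) →
      (∀ t : ℕ, s < t → t < s + d → ¬ IsRunMin A t) →
      ℓ ∣ d :=
  stmt_5_general a b ℓ A B h x hxA hxmax hℓ h1 h2 h4
end

section
/- Let (A, B) be an α-valuation of the complete bipartite graph K_{a,b} with ab > 1, and let ℓ ≥ 2 be an integer such that A is a union of blocks of the form {c, c+1, …, c+ℓ−1} with ℓ dividing c (that is, for every z ∈ A, all of ℓ⌊z/ℓ⌋, ℓ⌊z/ℓ⌋+1, …, ℓ⌊z/ℓ⌋+ℓ−1 belong to A). Then ℓ divides every element of B. -/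
def IsBlockUnion (ℓ : ℕ) (A : Finset ℕ) : Prop :=
  ∀ z ∈ A, ∀ j : ℕ, j < ℓ → ℓ * (z / ℓ) + j ∈ A

namespace IsBlockUnion

variable {ℓ : ℕ} {A : Finset ℕ}

theorem mem_of_div_eq (hA : IsBlockUnion ℓ A) (hℓ : 0 < ℓ) {z w : ℕ} (hz : z ∈ A)
    (hzw : w / ℓ = z / ℓ) : w ∈ A := by
  have hw := hA z hz (w % ℓ) (Nat.mod_lt w hℓ)
  rwa [← hzw, Nat.div_add_mod] at hw

theorem succ_mem (hA : IsBlockUnion ℓ A) (hℓ : 0 < ℓ) {z : ℕ} (hz : z ∈ A)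
    (hdvd : ¬ℓ ∣ z + 1) : z + 1 ∈ A :=
  hA.mem_of_div_eq hℓ hz (Nat.succ_div_of_not_dvd hdvd)

theorem sub_one_mem (hA : IsBlockUnion ℓ A) (hℓ : 0 < ℓ) {z : ℕ} (hz : z ∈ A)
    (hdvd : ¬ℓ ∣ z) : z - 1 ∈ A := by
  have hz0 : z ≠ 0 := by rintro rfl; exact hdvd (dvd_zero ℓ)
  obtain ⟨w, rfl⟩ := Nat.exists_eq_succ_of_ne_zero hz0
  exact hA.mem_of_div_eq hℓ hz (Nat.succ_div_of_not_dvd hdvd).symm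

end IsBlockUnion

namespace IsAlphaValuation

variable {a b : ℕ} {A B : Finset ℕ}

theorem nonempty_left (h : IsAlphaValuation a b A B) : A.Nonempty :=
  Finset.card_pos.mp (h.2.2.1 ▸ h.1)

theorem lt (h : IsAlphaValuation a b A B) {y z : ℕ} (hy : y ∈ B) (hz : z ∈ A) : z < y :=
  h.2.2.2.2.1 z hz y hy

theorem sub_le (h : IsAlphaValuation a b A B) {y z : ℕ} (hy : y ∈ B) (hz : z ∈ A) :
    y - z ≤ a * b := by
  have hmem : y - z ∈ (B ×ˢ A).image (fun p : ℕ × ℕ => p.1 - p.2) :=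
    Finset.mem_image.mpr ⟨(y, z), Finset.mem_product.mpr ⟨hy, hz⟩, rfl⟩
  rw [h.2.2.2.2.2.2, Finset.mem_Icc] at hmem
  exact hmem.2

theorem exists_sub_eq (h : IsAlphaValuation a b A B) {d : ℕ} (hd : 1 ≤ d) (hdab : d ≤ a * b) :
    ∃ y ∈ B, ∃ z ∈ A, y - z = d := by
  have hmem : d ∈ (B ×ˢ A).image (fun p : ℕ × ℕ => p.1 - p.2) := by
    rw [h.2.2.2.2.2.2, Finset.mem_Icc]
    exact ⟨hd, hdab⟩
  obtain ⟨⟨y, z⟩, hyz, rfl⟩ := Finset.mem_image.mp hmem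
  obtain ⟨hy, hz⟩ := Finset.mem_product.mp hyz
  exact ⟨y, hy, z, hz, rfl⟩

theorem eq_of_sub_eq (h : IsAlphaValuation a b A B) {y y' z z' : ℕ} (hy : y ∈ B) (hz : z ∈ A)
    (hy' : y' ∈ B) (hz' : z' ∈ A) (hsub : y - z = y' - z') : z = z' :=
  congrArg Prod.snd <| h.2.2.2.2.2.1 (x₁ := (y, z)) (x₂ := (y', z'))
    (Finset.mem_product.mpr ⟨hy, hz⟩) (Finset.mem_product.mpr ⟨hy', hz'⟩) hsub

theorem dvd_of_sub_eq (h : IsAlphaValuation a b A B) {ℓ : ℕ} (hA : IsBlockUnion ℓ A)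
    (hℓ : 0 < ℓ) (d : ℕ) : ∀ y ∈ B, ∀ z ∈ A, y - z = d → ℓ ∣ y := by
  induction d using Nat.strong_induction_on with
  | _ d ih =>
  intro y hy z hz hd
  have hzy := h.lt hy hz
  by_cases hz1 : ℓ ∣ z + 1
  · rcases (show d = 1 ∨ 1 < d by omega) with rfl | hd1
    · rwa [show y = z + 1 by omega]
    obtain ⟨y', hy', z', hz', hd'⟩ :=
      h.exists_sub_eq (d := d - 1) (by omega) (by have := h.sub_le hy hz; omega)
    have hy'z' := h.lt hy' hz'
    have hy'ℓ := ih (d - 1) (by omega) y' hy' z' hz' hd'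
    have hz'ℓ : ℓ ∣ z' := by
      by_contra hz'ℓ
      have hz'0 : z' ≠ 0 := by rintro rfl; exact hz'ℓ (dvd_zero ℓ)
      have hzz' := h.eq_of_sub_eq hy hz hy' (hA.sub_one_mem hℓ hz' hz'ℓ) (by omega)
      exact hz'ℓ (by rwa [hzz', Nat.sub_add_cancel (by omega)] at hz1)
    rw [show y = y' - z' + (z + 1) by omega]
    exact dvd_add (Nat.dvd_sub hy'ℓ hz'ℓ) hz1
  · have hz1A := hA.succ_mem hℓ hz hz1
    have hz1y := h.lt hy hz1A
    exact ih (d - 1) (by omega) y hy (z + 1) hz1A (by omega)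

end IsAlphaValuation

theorem stmt_7_general (a b ℓ : ℕ) (A B : Finset ℕ) (h : IsAlphaValuation a b A B)
    (hℓ : 2 ≤ ℓ)
    (hA : ∀ z ∈ A, ∀ j : ℕ, j < ℓ → ℓ * (z / ℓ) + j ∈ A) :
    ∀ y ∈ B, ℓ ∣ y := by
  intro y hy
  obtain ⟨z, hz⟩ := h.nonempty_left
  exact h.dvd_of_sub_eq hA (by omega) (y - z) y hy z hz rfl

theorem stmt_7 (a b ℓ : ℕ) (A B : Finset ℕ) (h : IsAlphaValuation a b A B)
    (hab : 1 < a * b) (hℓ : 2 ≤ ℓ)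
    (hA : ∀ z ∈ A, ∀ j : ℕ, j < ℓ → ℓ * (z / ℓ) + j ∈ A) :
    ∀ y ∈ B, ℓ ∣ y :=
  stmt_7_general a b ℓ A B h hℓ hA
end

section
/- (Projection I.) Let ℓ ≥ 2 and let (A, B) be a type I α-valuation of the complete bipartite graph K_{a,b} with parameter ℓ. Define W = {z/ℓ : z ∈ A and ℓ divides z} and X = {y/ℓ : y ∈ B}. Then ℓ divides a and (W, X) is an α-valuation of K_{a/ℓ, b}. -/
/-!
Both `A` and `B` are determined by their multiples of `ℓ`: `B` consists of multiples only, and `A`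
is the union of the blocks `[ℓ w, ℓ w + ℓ)` over `w ∈ W`, so `|A| = ℓ |W|`. Scaling by `ℓ` turns
differences of `(W, X)` into differences of `(B, A)`, and conversely a difference `y - z = ℓ d` of
`(B, A)` forces `ℓ ∣ z` because `ℓ ∣ y`. Hence the differences of `(W, X)` are exactly the `d` with
`ℓ d ∈ [1, ab]`, that is `d ∈ [1, (a/ℓ) b]`, each attained once.
-/

open Finset

section Projection

variable {ℓ : ℕ}

theorem Finset.mem_image_div_filter_dvd {S : Finset ℕ} (hℓ : 0 < ℓ) (x : ℕ) :
    x ∈ (S.filter (ℓ ∣ ·)).image (· / ℓ) ↔ ℓ * x ∈ S := by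
  simp only [mem_image, mem_filter]
  constructor
  · rintro ⟨z, ⟨hz, hℓz⟩, rfl⟩
    rwa [Nat.mul_div_cancel' hℓz]
  · exact fun hx => ⟨ℓ * x, ⟨hx, dvd_mul_right ℓ x⟩, Nat.mul_div_cancel_left x hℓ⟩

theorem Finset.card_eq_mul_card_of_blocks {A W : Finset ℕ} (hℓ : 0 < ℓ)
    (hA : ∀ z ∈ A, ∀ j < ℓ, ℓ * (z / ℓ) + j ∈ A) (hW : ∀ w, w ∈ W ↔ ℓ * w ∈ A) :
    A.card = ℓ * W.card := by
  have hdiv : ∀ w j, j < ℓ → (ℓ * w + j) / ℓ = w ∧ (ℓ * w + j) % ℓ = j := fun w j hj =>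
    ⟨by rw [Nat.mul_add_div hℓ, Nat.div_eq_of_lt hj, add_zero], by
      rw [Nat.mul_add_mod, Nat.mod_eq_of_lt hj]⟩
  rw [card_nbij' (t := W ×ˢ range ℓ) (fun z => (z / ℓ, z % ℓ)) (fun p => ℓ * p.1 + p.2),
    card_product, card_range, mul_comm]
  · intro z hz
    simpa [hW] using ⟨by simpa using hA z hz 0 hℓ, Nat.mod_lt z hℓ⟩
  · rintro ⟨w, j⟩ hwj
    simp only [coe_product, coe_range, Set.mem_prod, mem_coe, Set.mem_Iio, hW] at hwj
    simpa [Nat.mul_div_cancel_left w hℓ] using hA _ hwj.1 j hwj.2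
  · exact fun z _ => Nat.div_add_mod z ℓ
  · rintro ⟨w, j⟩ hwj
    simp only [coe_product, coe_range, Set.mem_prod, Set.mem_Iio] at hwj
    simp [hdiv w j hwj.2]

theorem mem_image_sub_iff_mul_mem {A B W X : Finset ℕ} (hℓ : 0 < ℓ)
    (hlt : ∀ z ∈ A, ∀ y ∈ B, z < y) (hB : ∀ y ∈ B, ℓ ∣ y)
    (hW : ∀ w, w ∈ W ↔ ℓ * w ∈ A) (hX : ∀ x, x ∈ X ↔ ℓ * x ∈ B) (d : ℕ) :
    d ∈ (X ×ˢ W).image (fun p : ℕ × ℕ => p.1 - p.2) ↔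
      ℓ * d ∈ (B ×ˢ A).image (fun p : ℕ × ℕ => p.1 - p.2) := by
  simp only [mem_image, mem_product, Prod.exists, hW, hX]
  constructor
  · rintro ⟨x, w, hxw, rfl⟩
    exact ⟨ℓ * x, ℓ * w, hxw, (Nat.mul_sub ℓ x w).symm⟩
  · rintro ⟨_, z, ⟨hy, hz⟩, hyz⟩
    obtain ⟨x, rfl⟩ := hB _ hy
    have hzy := hlt z hz _ hy
    have hdx : d ≤ x := (Nat.mul_le_mul_left_iff hℓ).1 (by omega)
    refine ⟨x, x - d, ⟨hy, ?_⟩, by omega⟩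
    rwa [Nat.mul_sub, show ℓ * x - ℓ * d = z by omega]

theorem IsAlphaValuation.of_mul_mem {a b : ℕ} {A B W X : Finset ℕ} (hℓ : 0 < ℓ)
    (h : IsAlphaValuation a b A B) (hB : ∀ y ∈ B, ℓ ∣ y)
    (hW : ∀ w, w ∈ W ↔ ℓ * w ∈ A) (hX : ∀ x, x ∈ X ↔ ℓ * x ∈ B) (ha : a = ℓ * W.card) :
    IsAlphaValuation W.card b W X := by
  obtain ⟨ha0, hb0, -, hBcard, hlt, hinj, himg⟩ := h
  have hWX : ∀ w ∈ W, ∀ x ∈ X, w < x := fun w hw x hx =>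
    Nat.lt_of_mul_lt_mul_left (hlt _ ((hW w).1 hw) _ ((hX x).1 hx))
  refine ⟨Nat.pos_of_mul_pos_left (ha ▸ ha0), hb0, rfl, ?_, hWX, ?_, ?_⟩
  · rw [← hBcard]
    refine card_nbij (ℓ * ·) (fun x hx => (hX x).1 hx) ?_ ?_
    · exact fun x _ x' _ hxx' => Nat.eq_of_mul_eq_mul_left hℓ hxx'
    · intro y hy
      obtain ⟨x, rfl⟩ := hB y hy
      exact ⟨x, (hX x).2 hy, rfl⟩
  · rintro ⟨x, w⟩ hxw ⟨x', w'⟩ hxw' heq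
    simp only [coe_product, Set.mem_prod, mem_coe] at hxw hxw' heq
    have hscaled := @hinj (ℓ * x, ℓ * w) (by simpa [← hX, ← hW] using hxw)
      (ℓ * x', ℓ * w') (by simpa [← hX, ← hW] using hxw')
      (by simp only [← Nat.mul_sub, heq])
    simp only [Prod.mk.injEq, Nat.mul_left_cancel_iff hℓ] at hscaled
    exact Prod.ext hscaled.1 hscaled.2
  · ext d
    rw [mem_image_sub_iff_mul_mem hℓ hlt hB hW hX, himg, mem_Icc, mem_Icc, ha, mul_assoc,
      Nat.mul_le_mul_left_iff hℓ, Nat.one_le_iff_ne_zero, Nat.one_le_iff_ne_zero,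
      mul_ne_zero_iff, and_iff_right hℓ.ne']

end Projection

theorem stmt_10 (a b ℓ : ℕ) (hℓ : 2 ≤ ℓ) (A B : Finset ℕ)
    (h : IsAlphaValuation a b A B)
    (hB : ∀ y ∈ B, ℓ ∣ y)
    (hA : ∀ z ∈ A, ∀ j : ℕ, j < ℓ → ℓ * (z / ℓ) + j ∈ A) :
    ℓ ∣ a ∧
    IsAlphaValuation (a / ℓ) b
      ((A.filter (fun z => ℓ ∣ z)).image (fun z => z / ℓ))
      (B.image (fun y => y / ℓ)) := by
  have hℓ0 : 0 < ℓ := by omega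
  have hW := mem_image_div_filter_dvd (S := A) hℓ0
  have hX : ∀ x, x ∈ B.image (· / ℓ) ↔ ℓ * x ∈ B := by
    simpa only [filter_true_of_mem hB] using mem_image_div_filter_dvd (S := B) hℓ0
  have ha : a = ℓ * _ := h.2.2.1 ▸ card_eq_mul_card_of_blocks hℓ0 hA hW
  refine ⟨ha ▸ dvd_mul_right _ _, ?_⟩
  rw [ha, Nat.mul_div_cancel_left _ hℓ0]
  exact h.of_mul_mem hℓ0 hB hW hX ha
end

section
/- (Projection II.) Let ℓ ≥ 2 and let (A, B) be a type II α-valuation of the complete bipartite graph K_{a,b} with parameter ℓ. Define W = {z/ℓ : z ∈ A} and X = {y/ℓ : y ∈ B and ℓ divides y}. Then ℓ divides b and (W, X) is an α-valuation of K_{a, b/ℓ}. -/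
lemma Nat.add_sub_one_div_eq_iff {ℓ m y : ℕ} (hℓ : 0 < ℓ) (hm : 0 < m) :
    (y + ℓ - 1) / ℓ = m ↔ ℓ * m - ℓ < y ∧ y ≤ ℓ * m := by
  have : ℓ ≤ ℓ * m := Nat.le_mul_of_pos_right ℓ hm
  rw [Nat.div_eq_iff hℓ, mul_comm m]
  omega

/-- Counted along `y ↦ ℓ * ((y + ℓ - 1) / ℓ) = ℓ * ⌈y / ℓ⌉`, whose fibre over a multiple
`e ∈ B` of `ℓ` is the whole block `e - ℓ < y ≤ e`. -/
lemma card_eq_mul_card_filter_dvd {ℓ : ℕ} (hℓ : 0 < ℓ) {B : Finset ℕ} (h0 : 0 ∉ B)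
    (hB : ∀ y ∈ B, ∀ j < ℓ, ℓ * ((y + ℓ - 1) / ℓ) - j ∈ B) :
    B.card = ℓ * (B.filter (ℓ ∣ ·)).card := by
  have hmaps : Set.MapsTo (fun y => ℓ * ((y + ℓ - 1) / ℓ)) B (B.filter (ℓ ∣ ·)) :=
    fun y hy => Finset.mem_filter.2 ⟨by simpa using hB y hy 0 hℓ, dvd_mul_right _ _⟩
  rw [Finset.card_eq_sum_card_fiberwise hmaps, mul_comm, ← smul_eq_mul, ← Finset.sum_const]
  refine Finset.sum_congr rfl fun e he => ?_
  obtain ⟨heB, m, rfl⟩ := Finset.mem_filter.1 he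
  have hm : 0 < m := Nat.pos_of_ne_zero fun hm => h0 (by simpa [hm] using heB)
  have hfiber : B.filter (fun y => ℓ * ((y + ℓ - 1) / ℓ) = ℓ * m) =
      Finset.Ioc (ℓ * m - ℓ) (ℓ * m) := by
    ext y
    simp only [Finset.mem_filter, Finset.mem_Ioc, Nat.mul_left_cancel_iff hℓ,
      Nat.add_sub_one_div_eq_iff hℓ hm]
    refine ⟨And.right, fun hy => ⟨?_, hy⟩⟩
    have hblock := hB _ heB (ℓ * m - y) (by omega)
    rwa [(Nat.add_sub_one_div_eq_iff hℓ hm).2 (by omega), Nat.sub_sub_self hy.2] at hblock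
  rw [hfiber, Nat.card_Ioc]
  have : ℓ ≤ ℓ * m := Nat.le_mul_of_pos_right ℓ hm
  omega

def differences (A B : Finset ℕ) : Finset ℕ :=
  (B ×ˢ A).image (fun p : ℕ × ℕ => p.1 - p.2)

lemma mem_differences {A B : Finset ℕ} {d : ℕ} :
    d ∈ differences A B ↔ ∃ y ∈ B, ∃ z ∈ A, y - z = d := by
  simp [differences, and_assoc]

/-- Injectivity of the differences is automatic: `a * b` pairs cover `a * b` values. -/
lemma IsAlphaValuation.of_differences_eq {a b : ℕ} {A B : Finset ℕ} (ha : 0 < a) (hb : 0 < b)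
    (hA : A.card = a) (hB : B.card = b) (hlt : ∀ z ∈ A, ∀ y ∈ B, z < y)
    (hdiff : differences A B = Finset.Icc 1 (a * b)) : IsAlphaValuation a b A B := by
  refine ⟨ha, hb, hA, hB, hlt, Finset.card_image_iff.1 ?_, hdiff⟩
  rw [← differences, hdiff, Nat.card_Icc, Finset.card_product, hA, hB, mul_comm]
  rfl

lemma mem_differences_image_mul {ℓ : ℕ} (hℓ : 0 < ℓ) {W X : Finset ℕ} {d : ℕ} :
    ℓ * d ∈ differences (W.image (ℓ * ·)) (X.image (ℓ * ·)) ↔ d ∈ differences W X := by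
  simp only [mem_differences, Finset.exists_mem_image, ← Nat.mul_sub,
    Nat.mul_left_cancel_iff hℓ]

lemma Finset.image_mul_image_div {ℓ : ℕ} {A : Finset ℕ} (hA : ∀ z ∈ A, ℓ ∣ z) :
    (A.image (· / ℓ)).image (ℓ * ·) = A := by
  rw [Finset.image_image]
  exact (Finset.image_congr fun z hz => Nat.mul_div_cancel' (hA z hz)).trans Finset.image_id

lemma Finset.card_image_div {ℓ : ℕ} {A : Finset ℕ} (hA : ∀ z ∈ A, ℓ ∣ z) :
    (A.image (· / ℓ)).card = A.card :=
  Finset.card_image_of_injOn fun _ hz _ hz' => (Nat.div_left_inj (hA _ hz) (hA _ hz')).1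

/-- A difference `y - z` with `ℓ ∣ z` is a multiple of `ℓ` only if `ℓ ∣ y`. -/
lemma mem_differences_filter_dvd_iff {ℓ n : ℕ} {A B : Finset ℕ} (hA : ∀ z ∈ A, ℓ ∣ z)
    (hle : ∀ z ∈ A, ∀ y ∈ B, z ≤ y) (hn : ℓ ∣ n) :
    n ∈ differences A (B.filter (ℓ ∣ ·)) ↔ n ∈ differences A B := by
  simp only [mem_differences, Finset.mem_filter, and_assoc]
  refine ⟨fun ⟨y, hy, _, z, hz, hyz⟩ => ⟨y, hy, z, hz, hyz⟩, ?_⟩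
  rintro ⟨y, hy, z, hz, hyz⟩
  refine ⟨y, hy, ?_, z, hz, hyz⟩
  rw [← Nat.sub_add_cancel (hle z hz y hy), hyz]
  exact dvd_add hn (hA z hz)

theorem stmt_11 (a b ℓ : ℕ) (hℓ : 2 ≤ ℓ) (A B : Finset ℕ)
    (h : IsAlphaValuation a b A B)
    (hA : ∀ z ∈ A, ℓ ∣ z)
    (hB : ∀ y ∈ B, ∀ j : ℕ, j < ℓ → ℓ * ((y + ℓ - 1) / ℓ) - j ∈ B) :
    ℓ ∣ b ∧
    IsAlphaValuation a (b / ℓ)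
      (A.image (fun z => z / ℓ))
      ((B.filter (fun y => ℓ ∣ y)).image (fun y => y / ℓ)) := by
  obtain ⟨ha, hb, hcardA, hcardB, hlt, -, hdiff : differences A B = _⟩ := h
  have hℓ0 : 0 < ℓ := by omega
  set B' := B.filter (fun y => ℓ ∣ y)
  have hB' : ∀ y ∈ B', ℓ ∣ y := fun y hy => (Finset.mem_filter.1 hy).2
  have h0 : 0 ∉ B := fun h0B => by
    obtain ⟨z, hz⟩ := Finset.card_pos.1 (hcardA ▸ ha)
    exact Nat.not_lt_zero _ (hlt z hz 0 h0B)
  have hcount : b = ℓ * B'.card := hcardB ▸ card_eq_mul_card_filter_dvd hℓ0 h0 hB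
  have hb' : b / ℓ = B'.card := by rw [hcount, Nat.mul_div_cancel_left _ hℓ0]
  refine ⟨⟨_, hcount⟩, IsAlphaValuation.of_differences_eq ha ?_
    (hcardA ▸ Finset.card_image_div hA) (by rw [Finset.card_image_div hB', hb']) ?_ ?_⟩
  · exact hb' ▸ Nat.pos_of_mul_pos_left (hcount ▸ hb)
  · simp only [Finset.mem_image]
    rintro _ ⟨z, hz, rfl⟩ _ ⟨y, hy, rfl⟩
    exact Nat.div_lt_div_of_lt_of_dvd (hB' y hy) (hlt z hz y (Finset.mem_filter.1 hy).1)
  · ext d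
    rw [← mem_differences_image_mul hℓ0, Finset.image_mul_image_div hA,
      Finset.image_mul_image_div hB', mem_differences_filter_dvd_iff hA
        (fun z hz y hy => (hlt z hz y hy).le) (dvd_mul_right ℓ d), hdiff,
      hb', hcount, mul_left_comm, Finset.mem_Icc, Finset.mem_Icc,
      Nat.mul_le_mul_left_iff hℓ0, Nat.one_le_iff_ne_zero, Nat.one_le_iff_ne_zero,
      mul_ne_zero_iff, and_iff_right hℓ0.ne']
end

section
/- (Blowup I.) Let (W, X) be an α-valuation of the complete bipartite graph K_{a,b} and let ℓ ≥ 2 be an integer. Define A = {ℓw + j : w ∈ W, 0 ≤ j ≤ ℓ−1} and B = {ℓx : x ∈ X}. Then (A, B) is an α-valuation of K_{ℓa, b}. -/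
/-! Every difference in the blown-up pair has the form `ℓx - (ℓw + j) = ℓ(x - w) - j` with
`x - w ∈ [1, ab]` and `0 ≤ j < ℓ`, and `(d, j) ↦ ℓd - j` maps `[1, ab] × [0, ℓ)` onto
`[1, ℓab]`. So the new differences fill `[1, ℓab]`; as there are exactly `ℓab` pairs, they are
also pairwise distinct. -/

open Finset

namespace AlphaValuation

lemma mul_add_injOn (ℓ : ℕ) :
    Set.InjOn (fun p : ℕ × ℕ => ℓ * p.1 + p.2) (Set.univ ×ˢ Set.Iio ℓ) := by
  rintro ⟨w, j⟩ ⟨-, hj : j < ℓ⟩ ⟨w', j'⟩ ⟨-, hj' : j' < ℓ⟩ (he : ℓ * w + j = ℓ * w' + j')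
  have hℓ : 0 < ℓ := by omega
  have hdiv := congrArg (· / ℓ) he
  have hmod := congrArg (· % ℓ) he
  simp only [Nat.mul_add_div hℓ, Nat.div_eq_of_lt hj, Nat.div_eq_of_lt hj',
    Nat.mul_add_mod, Nat.mod_eq_of_lt hj, Nat.mod_eq_of_lt hj', add_zero] at hdiv hmod
  rw [hdiv, hmod]

lemma mul_add_lt_mul {ℓ w j x : ℕ} (hj : j < ℓ) (hwx : w < x) : ℓ * w + j < ℓ * x :=
  calc ℓ * w + j < ℓ * (w + 1) := by rw [mul_add_one]; omega
    _ ≤ ℓ * x := Nat.mul_le_mul_left ℓ hwx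

lemma mul_sub_mul_add (ℓ x w j : ℕ) : ℓ * x - (ℓ * w + j) = ℓ * (x - w) - j := by
  rw [Nat.mul_sub, Nat.sub_sub]

/-- The preimage of `m` is `(d, j) = ((m - 1) / ℓ + 1, ℓ - 1 - (m - 1) % ℓ)`. -/
lemma image_mul_sub_Icc_product_range {ℓ : ℕ} (hℓ : 0 < ℓ) (n : ℕ) :
    ((Icc 1 n ×ˢ range ℓ).image fun p : ℕ × ℕ => ℓ * p.1 - p.2) = Icc 1 (ℓ * n) := by
  ext m
  simp only [mem_image, mem_product, mem_Icc, mem_range, Prod.exists]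
  constructor
  · rintro ⟨d, j, ⟨⟨hd1, hdn⟩, hj⟩, rfl⟩
    have : ℓ ≤ ℓ * d := Nat.le_mul_of_pos_right ℓ hd1
    have : ℓ * d ≤ ℓ * n := Nat.mul_le_mul_left ℓ hdn
    omega
  · rintro ⟨hm1, hmn⟩
    have hq : (m - 1) / ℓ < n := (Nat.div_lt_iff_lt_mul hℓ).2 (by rw [mul_comm]; omega)
    have hr : (m - 1) % ℓ < ℓ := Nat.mod_lt _ hℓ
    have := Nat.div_add_mod (m - 1) ℓ
    refine ⟨(m - 1) / ℓ + 1, ℓ - 1 - (m - 1) % ℓ, ⟨⟨Nat.le_add_left 1 _, hq⟩, by omega⟩, ?_⟩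
    rw [mul_add_one]
    omega

lemma image_sub_product_blowup (ℓ : ℕ) (W X : Finset ℕ) :
    ((X.image (ℓ * ·) ×ˢ (W ×ˢ range ℓ).image fun p : ℕ × ℕ => ℓ * p.1 + p.2).image
        fun p : ℕ × ℕ => p.1 - p.2) =
      (((X ×ˢ W).image fun p : ℕ × ℕ => p.1 - p.2) ×ˢ range ℓ).image
        fun p : ℕ × ℕ => ℓ * p.1 - p.2 := by
  ext m
  simp only [mem_image, mem_product, mem_range, Prod.exists]
  constructor
  · rintro ⟨-, -, ⟨⟨x, hx, rfl⟩, w, j, ⟨hw, hj⟩, rfl⟩, rfl⟩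
    exact ⟨x - w, j, ⟨⟨x, w, ⟨hx, hw⟩, rfl⟩, hj⟩, (mul_sub_mul_add ℓ x w j).symm⟩
  · rintro ⟨-, j, ⟨⟨x, w, ⟨hx, hw⟩, rfl⟩, hj⟩, rfl⟩
    exact ⟨ℓ * x, ℓ * w + j, ⟨⟨x, hx, rfl⟩, w, j, ⟨hw, hj⟩, rfl⟩, mul_sub_mul_add ℓ x w j⟩

end AlphaValuation

open AlphaValuation in
theorem stmt_12 (a b ℓ : ℕ) (hℓ : 2 ≤ ℓ) (W X : Finset ℕ)
    (h : IsAlphaValuation a b W X) :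
    IsAlphaValuation (ℓ * a) b
      ((W ×ˢ Finset.range ℓ).image (fun p => ℓ * p.1 + p.2))
      (X.image (fun x => ℓ * x)) := by
  obtain ⟨ha, hb, hWa, hXb, hlt, -, hdiff⟩ := h
  have hℓ0 : 0 < ℓ := by omega
  have hcardA : ((W ×ˢ range ℓ).image fun p : ℕ × ℕ => ℓ * p.1 + p.2).card = ℓ * a := by
    rw [card_image_of_injOn ((mul_add_injOn ℓ).mono (by simp [Set.prod_subset_prod_iff])),
      card_product, card_range, hWa, mul_comm]
  have hcardB : (X.image (ℓ * ·)).card = b := by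
    rw [card_image_of_injective _ (mul_right_injective₀ hℓ0.ne'), hXb]
  have himage := image_sub_product_blowup ℓ W X
  rw [hdiff, image_mul_sub_Icc_product_range hℓ0, ← mul_assoc] at himage
  refine ⟨by positivity, hb, hcardA, hcardB, ?_, ?_, himage⟩
  · simp only [mem_image, mem_product, mem_range, Prod.exists]
    rintro - ⟨w, j, ⟨hw, hj⟩, rfl⟩ - ⟨x, hx, rfl⟩
    exact mul_add_lt_mul hj (hlt w hw x hx)
  · apply injOn_of_card_image_eq
    rw [himage, card_product, hcardA, hcardB, Nat.card_Icc, Nat.add_sub_cancel, mul_comm]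
end

section
/- (Blowup II.) Let (W, X) be an α-valuation of the complete bipartite graph K_{a,b} and let ℓ ≥ 2 be an integer. Define A = {ℓw : w ∈ W} and B = {ℓx − j : x ∈ X, 0 ≤ j ≤ ℓ−1}. Then (A, B) is an α-valuation of K_{a, ℓb}. -/
/-!
The new differences are `(ℓ * x - j) - ℓ * w = ℓ * (x - w) - j` with `0 ≤ j < ℓ`. Since
`(d, j) ↦ ℓ * d - j` is injective on `d ≥ 1, j < ℓ` (division with remainder by `ℓ`) and sends
`[1, a * b] × [0, ℓ)` into `[1, ℓ * a * b]`, the new differences are distinct and lie in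
`[1, ℓ * a * b]`; there are `a * ℓ * b` of them, so they fill that interval.
-/

open Finset

/-- `ℓ * x - j = ℓ * x' - j'` gives `ℓ * x + j' = ℓ * x' + j`, and division with remainder by `ℓ`
recovers the pair. -/
lemma injOn_mul_sub {ℓ : ℕ} :
    Set.InjOn (fun p : ℕ × ℕ => ℓ * p.1 - p.2) {p | 0 < p.1 ∧ p.2 < ℓ} := by
  rintro ⟨x, j⟩ ⟨hx, hj⟩ ⟨x', j'⟩ ⟨hx', hj'⟩ h
  dsimp only at hx hx' h
  have hℓ : 0 < ℓ := by omega
  have hsum : ℓ * x + j' = ℓ * x' + j := by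
    have := Nat.le_mul_of_pos_right ℓ hx
    have := Nat.le_mul_of_pos_right ℓ hx'
    omega
  have hq := congrArg (· / ℓ) hsum
  have hr := congrArg (· % ℓ) hsum
  simp only [Nat.mul_add_div hℓ, Nat.mul_add_mod, Nat.div_eq_of_lt hj, Nat.div_eq_of_lt hj',
    Nat.mod_eq_of_lt hj, Nat.mod_eq_of_lt hj', add_zero] at hq hr
  rw [hq, hr]

lemma mapsTo_mul_sub (ℓ N : ℕ) :
    Set.MapsTo (fun p : ℕ × ℕ => ℓ * p.1 - p.2) (↑(Icc 1 N) ×ˢ ↑(range ℓ)) ↑(Icc 1 (ℓ * N)) := by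
  rintro ⟨d, j⟩ hp
  simp only [Set.mem_prod, mem_coe, mem_Icc, mem_range] at hp ⊢
  have h1 := Nat.mul_le_mul_left ℓ hp.1.1
  have h2 := Nat.mul_le_mul_left ℓ hp.1.2
  omega

namespace IsAlphaValuation

variable {a b : ℕ} {A B : Finset ℕ}

lemma of_injOn (ha : 0 < a) (hb : 0 < b) (hA : #A = a) (hB : #B = b)
    (hinj : Set.InjOn (fun p : ℕ × ℕ => p.1 - p.2) ↑(B ×ˢ A))
    (hmaps : Set.MapsTo (fun p : ℕ × ℕ => p.1 - p.2) ↑(B ×ˢ A) ↑(Icc 1 (a * b))) :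
    IsAlphaValuation a b A B := by
  refine ⟨ha, hb, hA, hB, fun z hz y hy => ?_, hinj, eq_of_subset_of_card_le ?_ ?_⟩
  · have : 1 ≤ y - z := (mem_Icc.1 (@hmaps (y, z) (mem_product.2 ⟨hy, hz⟩))).1
    omega
  · rwa [← coe_subset, coe_image, Set.image_subset_iff]
  · rw [card_image_of_injOn hinj, card_product, hA, hB, Nat.card_Icc, Nat.add_sub_cancel, mul_comm]

lemma mapsTo_sub (h : IsAlphaValuation a b A B) :
    Set.MapsTo (fun p : ℕ × ℕ => p.1 - p.2) ↑(B ×ˢ A) ↑(Icc 1 (a * b)) := by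
  rw [← h.2.2.2.2.2.2, coe_image]
  exact Set.mapsTo_image _ _

lemma pos_of_mem (h : IsAlphaValuation a b A B) {y : ℕ} (hy : y ∈ B) : 0 < y := by
  obtain ⟨ha, -, hA, -, hlt, -⟩ := h
  obtain ⟨z, hz⟩ : A.Nonempty := card_pos.1 (hA ▸ ha)
  exact Nat.zero_lt_of_lt (hlt z hz y hy)

theorem blowup {ℓ : ℕ} {W X : Finset ℕ} (h : IsAlphaValuation a b W X) (hℓ : 0 < ℓ) :
    IsAlphaValuation a (ℓ * b) (W.image (fun w => ℓ * w))
      ((X ×ˢ range ℓ).image (fun p => ℓ * p.1 - p.2)) := by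
  set D := fun p : ℕ × ℕ => p.1 - p.2
  set g := fun p : ℕ × ℕ => ℓ * p.1 - p.2
  set φ := fun q : (ℕ × ℕ) × ℕ => (ℓ * q.1.1 - q.2, ℓ * q.1.2)
  have hprod : (X ×ˢ range ℓ).image g ×ˢ W.image (ℓ * ·) = ((X ×ˢ W) ×ˢ range ℓ).image φ := by
    ext ⟨y, z⟩
    simp only [g, φ, mem_product, mem_image, mem_range, Prod.exists, Prod.mk.injEq]
    aesop
  -- the difference of a blown-up pair `((x, w), j)` is the blow-up `ℓ * (x - w) - j` of `x - w`
  have hcomp : D ∘ φ = g ∘ Prod.map D (id : ℕ → ℕ) := by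
    ext ⟨⟨x, w⟩, j⟩
    simp only [D, g, φ, Function.comp_apply, Prod.map, id]
    rw [Nat.mul_sub, Nat.sub_right_comm]
  obtain ⟨ha, hb, hW, hX, -, hinj, -⟩ := id h
  have hg : Set.InjOn g ↑(X ×ˢ range ℓ) := injOn_mul_sub.mono fun p hp => by
    simp only [coe_product, Set.mem_prod, mem_coe, mem_range] at hp
    exact ⟨h.pos_of_mem hp.1, hp.2⟩
  have hg_Icc : Set.InjOn g (↑(Icc 1 (a * b)) ×ˢ ↑(range ℓ)) := injOn_mul_sub.mono fun p hp => by
    simp only [Set.mem_prod, mem_coe, mem_Icc, mem_range] at hp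
    exact ⟨hp.1.1, hp.2⟩
  have hD : Set.MapsTo (Prod.map D (id : ℕ → ℕ)) (↑(X ×ˢ W) ×ˢ ↑(range ℓ))
      (↑(Icc 1 (a * b)) ×ˢ ↑(range ℓ)) :=
    h.mapsTo_sub.prodMap (Set.mapsTo_id _)
  refine of_injOn ha (Nat.mul_pos hℓ hb) ?_ ?_ ?_ ?_
  · rw [card_image_of_injective _ (mul_right_injective₀ hℓ.ne'), hW]
  · rw [card_image_of_injOn hg, card_product, card_range, hX, mul_comm]
  · rw [hprod, coe_image]
    refine Set.InjOn.image_of_comp ?_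
    rw [hcomp, coe_product]
    exact hg_Icc.comp (hinj.prodMap (Set.injOn_id _)) hD
  · rw [hprod, coe_image, Set.mapsTo_image_iff, hcomp, mul_left_comm, coe_product]
    exact (mapsTo_mul_sub ℓ (a * b)).comp hD

end IsAlphaValuation

theorem stmt_13 (a b ℓ : ℕ) (hℓ : 2 ≤ ℓ) (W X : Finset ℕ)
    (h : IsAlphaValuation a b W X) :
    IsAlphaValuation a (ℓ * b)
      (W.image (fun w => ℓ * w))
      ((X ×ˢ Finset.range ℓ).image (fun p => ℓ * p.1 - p.2)) :=
  h.blowup (by omega)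
end

section
/- Suppose (A, B) is an (a²+1, 2, a; 1)-SEDF in the cyclic group Z_{a²+1}. Then there exist elements g, h ∈ Z_{a²+1} such that −A = g + A and −B = h + B, where −S = {−x : x ∈ S} and g + S = {g + x : x ∈ S}. -/
/-- An `(n, 2, k; 1)`-SEDF in the cyclic group `ZMod n`: a pair `(A, B)` of disjoint
`k`-element subsets such that each of the multisets `{x - y : x ∈ A, y ∈ B}` and
`{y - x : x ∈ A, y ∈ B}` contains every nonzero element of `ZMod n` exactly once. -/
def IsSEDF (n k : ℕ) (A B : Finset (ZMod n)) : Prop :=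
  Disjoint A B ∧ A.card = k ∧ B.card = k ∧
  (∀ d : ZMod n, d ≠ 0 →
    ∃! p : ZMod n × ZMod n, p.1 ∈ A ∧ p.2 ∈ B ∧ p.1 - p.2 = d) ∧
  (∀ d : ZMod n, d ≠ 0 →
    ∃! p : ZMod n × ZMod n, p.1 ∈ A ∧ p.2 ∈ B ∧ p.2 - p.1 = d)

/-!
If `(x, y) ↦ x - y` maps `X × Y` bijectively onto the nonzero elements of a finite abelian
group, then `(x, y) ↦ x + y` is injective on `X × Y` (`x + y = x' + y'` means
`x - y' = x' - y`), so, as `|X × Y| = |G| - 1`, it misses exactly one element `z`.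
Counting the solutions of `x - x' + y = g` with `x, x' ∈ X`, `y ∈ Y` through the difference
`x' - y` gives `|X| - [g ∈ X]`, and through the sum `x + y` gives `|X| - [z - g ∈ X]`.
Hence `X = z - X`, that is `-X = -z + X`. The hypotheses are symmetric in `X` and `Y`, so the
same holds for `Y`.
-/

open Finset

lemma Set.BijOn.card_filter_eq {α β : Type*} [DecidableEq β] {f : α → β} {s : Finset α}
    {t : Set β} (hf : Set.BijOn f s t) (w : β) [Decidable (w ∈ t)] :
    #{p ∈ s | f p = w} = if w ∈ t then 1 else 0 := by
  split_ifs with hw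
  · obtain ⟨p, hp, rfl⟩ := hf.surjOn hw
    rw [card_eq_one]
    refine ⟨p, Finset.eq_singleton_iff_unique_mem.mpr
      ⟨mem_filter.mpr ⟨hp, rfl⟩, fun q hq => ?_⟩⟩
    rw [mem_filter] at hq
    exact hf.injOn hq.1 hp hq.2
  · exact card_eq_zero.mpr (filter_eq_empty_iff.mpr fun p hp hpw => hw (hpw ▸ hf.mapsTo hp))

section

variable {G : Type*} [AddCommGroup G]

lemma bijOn_sub_prod_swap {X Y : Set G}
    (h : Set.BijOn (fun p : G × G => p.1 - p.2) (X ×ˢ Y) {0}ᶜ) :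
    Set.BijOn (fun p : G × G => p.1 - p.2) (Y ×ˢ X) {0}ᶜ := by
  have hswap : Set.BijOn Prod.swap (Y ×ˢ X) (X ×ˢ Y) :=
    (Equiv.prodComm G G).bijOn (by simp [and_comm])
  have hneg : Set.BijOn Neg.neg ({0}ᶜ : Set G) {0}ᶜ := (Equiv.neg G).bijOn (by simp)
  exact (hneg.comp (h.comp hswap)).congr fun p _ => by simp

lemma bijOn_add_prod_swap {X Y : Set G} {z : G}
    (h : Set.BijOn (fun p : G × G => p.1 + p.2) (X ×ˢ Y) {z}ᶜ) :
    Set.BijOn (fun p : G × G => p.1 + p.2) (Y ×ˢ X) {z}ᶜ := by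
  have hswap : Set.BijOn Prod.swap (Y ×ˢ X) (X ×ˢ Y) :=
    (Equiv.prodComm G G).bijOn (by simp [and_comm])
  exact (h.comp hswap).congr fun p _ => add_comm _ _

lemma injOn_add_of_injOn_sub {X Y : Set G}
    (h : Set.InjOn (fun p : G × G => p.1 - p.2) (X ×ˢ Y)) :
    Set.InjOn (fun p : G × G => p.1 + p.2) (X ×ˢ Y) := by
  rintro ⟨x, y⟩ ⟨hx, hy⟩ ⟨x', y'⟩ ⟨hx', hy'⟩ (hsum : x + y = x' + y')
  have : (x, y') = (x', y) :=
    h (Set.mk_mem_prod hx hy') (Set.mk_mem_prod hx' hy) (sub_eq_sub_iff_add_eq_add.mpr hsum)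
  simp_all

variable [DecidableEq G]

lemma exists_bijOn_add_of_bijOn_sub [Fintype G] {X Y : Finset G}
    (h : Set.BijOn (fun p : G × G => p.1 - p.2) (↑X ×ˢ ↑Y) {0}ᶜ) :
    ∃ z, Set.BijOn (fun p : G × G => p.1 + p.2) (↑X ×ˢ ↑Y) {z}ᶜ := by
  set S := (X ×ˢ Y).image fun p => p.1 + p.2
  have hinj := injOn_add_of_injOn_sub h.injOn
  have hcard : #(X ×ˢ Y) = #({0}ᶜ : Finset G) :=
    Set.BijOn.finsetCard_eq _ (by simpa using h)
  have hS : #Sᶜ = 1 := by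
    rw [card_compl, card_image_of_injOn (by simpa using hinj), hcard, card_compl, card_singleton]
    have := Fintype.card_pos (α := G)
    omega
  obtain ⟨z, hz⟩ := card_eq_one.mp hS
  refine ⟨z, ?_⟩
  have himage : (fun p : G × G => p.1 + p.2) '' (↑X ×ˢ ↑Y) = {z}ᶜ := by
    rw [← coe_singleton, ← coe_compl, ← eq_compl_comm.mpr hz.symm]
    simp [S]
  exact himage ▸ hinj.bijOn_image

lemma sum_card_filter_sub_eq_sum_card_filter_add (X Y : Finset G) (g : G) :
    ∑ x ∈ X, #{p ∈ X ×ˢ Y | p.1 - p.2 = x - g} =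
      ∑ x ∈ X, #{p ∈ X ×ˢ Y | p.1 + p.2 = g + x} := by
  simp only [card_filter, sum_product]
  rw [sum_comm]
  refine sum_congr rfl fun x _ => sum_congr rfl fun x' _ => sum_congr rfl fun y _ => ?_
  refine if_congr ?_ rfl rfl
  rw [sub_eq_sub_iff_add_eq_add, add_comm g, eq_comm]

theorem sub_mem_iff_of_bijOn {X Y : Finset G} {z : G}
    (hsub : Set.BijOn (fun p : G × G => p.1 - p.2) (↑X ×ˢ ↑Y) {0}ᶜ)
    (hadd : Set.BijOn (fun p : G × G => p.1 + p.2) (↑X ×ˢ ↑Y) {z}ᶜ) (g : G) :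
    z - g ∈ X ↔ g ∈ X := by
  have hcount : #(X.erase g) = #(X.erase (z - g)) := by
    have := sum_card_filter_sub_eq_sum_card_filter_add X Y g
    rw [← coe_product] at hsub hadd
    simp only [hsub.card_filter_eq, hadd.card_filter_eq, ← card_filter] at this
    simp only [Set.mem_compl_singleton_iff, sub_ne_zero, ne_eq, ← eq_sub_iff_add_eq'] at this
    simpa only [← ne_eq, filter_ne'] using this
  have mem_of_card_erase_eq {a b : G} (hab : #(X.erase a) = #(X.erase b)) (hb : b ∈ X) :
      a ∈ X := by
    by_contra ha
    have := card_erase_lt_of_mem hb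
    rw [← hab, erase_eq_of_notMem ha] at this
    exact lt_irrefl _ this
  exact ⟨mem_of_card_erase_eq hcount, mem_of_card_erase_eq hcount.symm⟩

lemma image_neg_eq_image_add_of_sub_mem_iff {X : Finset G} {z : G}
    (h : ∀ g, z - g ∈ X ↔ g ∈ X) : X.image (fun x => -x) = X.image (fun x => -z + x) := by
  ext y
  simp only [mem_image]
  constructor <;> rintro ⟨x, hx, rfl⟩ <;> exact ⟨z - x, (h x).mpr hx, by abel⟩

end

lemma IsSEDF.bijOn_sub {n k : ℕ} {A B : Finset (ZMod n)} (h : IsSEDF n k A B) :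
    Set.BijOn (fun p : ZMod n × ZMod n => p.1 - p.2) (↑A ×ˢ ↑B) {0}ᶜ := by
  obtain ⟨hAB, -, -, hrep, -⟩ := h
  have hne {x y : ZMod n} (hx : x ∈ A) (hy : y ∈ B) : x - y ≠ 0 :=
    sub_ne_zero.mpr fun hxy => disjoint_left.mp hAB hx (hxy ▸ hy)
  refine ⟨fun _ ⟨hx, hy⟩ => hne hx hy,
    fun p ⟨hx, hy⟩ q ⟨hx', hy'⟩ hpq => ?_, fun d hd => ?_⟩
  · exact (hrep _ (hne hx hy)).unique ⟨hx, hy, rfl⟩ ⟨hx', hy', hpq.symm⟩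
  · obtain ⟨p, ⟨hx, hy, hpd⟩, -⟩ := hrep d hd
    exact ⟨p, ⟨hx, hy⟩, hpd⟩

theorem stmt_16_general (a : ℕ) (A B : Finset (ZMod (a ^ 2 + 1)))
    (h : IsSEDF (a ^ 2 + 1) a A B) :
    ∃ g h' : ZMod (a ^ 2 + 1),
      A.image (fun x => -x) = A.image (fun x => g + x) ∧
      B.image (fun x => -x) = B.image (fun x => h' + x) := by
  have hsub := h.bijOn_sub
  obtain ⟨z, hadd⟩ := exists_bijOn_add_of_bijOn_sub hsub
  exact ⟨-z, -z, image_neg_eq_image_add_of_sub_mem_iff (sub_mem_iff_of_bijOn hsub hadd),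
    image_neg_eq_image_add_of_sub_mem_iff
      (sub_mem_iff_of_bijOn (bijOn_sub_prod_swap hsub) (bijOn_add_prod_swap hadd))⟩

theorem stmt_16 (a : ℕ) (ha : 0 < a) (A B : Finset (ZMod (a ^ 2 + 1)))
    (h : IsSEDF (a ^ 2 + 1) a A B) :
    ∃ g h' : ZMod (a ^ 2 + 1),
      A.image (fun x => -x) = A.image (fun x => g + x) ∧
      B.image (fun x => -x) = B.image (fun x => h' + x) :=
  stmt_16_general a A B h
end

section
/- Suppose (A, B) is an (a²+1, 2, a; 1)-SEDF in the cyclic group Z_{a²+1}. Then there exists an element g ∈ Z_{a²+1} such that g + A = −(g + A) and g + B = −(g + B), where g + S = {g + x : x ∈ S} and −S = {−x : x ∈ S}; that is, some common translate of the pair (A, B) is symmetric. -/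
open Finset AddMonoidAlgebra

lemma Finset.card_filter_apply_eq_apply_eq_sum_sq {M ι : Type*} [DecidableEq M] [Fintype M]
    (S : Finset ι) (φ : ι → M) : #{p ∈ S ×ˢ S | φ p.1 = φ p.2} = ∑ d, #{x ∈ S | φ x = d} ^ 2 := by
  rw [card_eq_sum_card_fiberwise (f := fun p => φ p.1) (t := univ) fun _ _ => mem_univ _]
  refine sum_congr rfl fun d _ => ?_
  rw [sq, ← card_product]
  congr 1
  ext ⟨x, y⟩
  simp only [mem_filter, mem_product]
  grind

section GroupRing

variable {M ι κ : Type*}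

/-- The multiset `φ(S)` as an element of the group ring. -/
noncomputable def imageSum [AddMonoid M] (S : Finset ι) (φ : ι → M) : ℤ[M] :=
  ∑ x ∈ S, single (φ x) 1

section AddMonoid

variable [AddMonoid M]

lemma imageSum_mul (S : Finset ι) (T : Finset κ) (φ : ι → M) (ψ : κ → M) :
    imageSum S φ * imageSum T ψ = imageSum (S ×ˢ T) fun p => φ p.1 + ψ p.2 := by
  simp only [imageSum, sum_mul_sum, sum_product, single_mul_single, one_mul]

lemma single_mul_imageSum (z : M) (S : Finset ι) (φ : ι → M) :
    single z 1 * imageSum S φ = imageSum S fun x => z + φ x := by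
  simp only [imageSum, mul_sum, single_mul_single, one_mul]

variable [DecidableEq M]

lemma imageSum_image {S : Finset ι} {φ : ι → M} (hφ : Set.InjOn φ S) :
    imageSum (S.image φ) id = imageSum S φ :=
  sum_image hφ

lemma coeff_imageSum (S : Finset ι) (φ : ι → M) (c : M) :
    (imageSum S φ).coeff c = #{x ∈ S | φ x = c} := by
  simp [imageSum, coeff_sum, Finsupp.single_apply]

lemma imageSum_id_injective : Function.Injective fun S : Finset M => imageSum S id := by
  intro S T h
  ext c
  have := congr(($h).coeff c)
  simp only [coeff_imageSum, id, filter_eq'] at this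
  split_ifs at this <;> simp_all

variable [Fintype M]

lemma sum_coeff_imageSum (S : Finset ι) (φ : ι → M) : ∑ d, (imageSum S φ).coeff d = #S := by
  simp only [coeff_imageSum]
  exact_mod_cast (card_eq_sum_card_fiberwise fun x _ => mem_univ (φ x)).symm

lemma coeff_imageSum_univ (c : M) : (imageSum univ id).coeff c = 1 := by
  simp [coeff_imageSum, filter_eq']

lemma coeff_imageSum_univ_sub_one (d : M) :
    (imageSum univ id - 1 : ℤ[M]).coeff d = if d = 0 then 0 else 1 := by
  split_ifs <;> simp [coeff_imageSum_univ, one_def, *]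

end AddMonoid

variable [AddGroup M] [DecidableEq M] [Fintype M]

lemma imageSum_mul_imageSum_univ (S : Finset ι) (φ : ι → M) :
    imageSum S φ * imageSum univ id = #S • imageSum (univ : Finset M) id := by
  have hz (z : M) : single z 1 * imageSum univ id = imageSum (univ : Finset M) id := by
    simp only [single_mul_imageSum, id_eq]
    rw [← imageSum_image (add_right_injective z).injOn,
      image_univ_of_surjective (add_left_surjective z)]
  rw [imageSum, sum_mul, sum_congr rfl fun x _ => hz (φ x), sum_const]

lemma coeff_zero_imageSum_mul_neg (S : Finset ι) (φ : ι → M) :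
    (imageSum S φ * imageSum S (-φ ·)).coeff 0 = ∑ d, (imageSum S φ).coeff d ^ 2 := by
  simp only [imageSum_mul, coeff_imageSum, add_neg_eq_zero]
  exact_mod_cast card_filter_apply_eq_apply_eq_sum_sq S φ

lemma imageSum_eq_univ_sub_one {S : Finset ι} {φ : ι → M} (h₀ : ∀ x ∈ S, φ x ≠ 0)
    (h : ∀ d ≠ 0, ∃! x, x ∈ S ∧ φ x = d) : imageSum S φ = imageSum univ id - 1 := by
  ext d
  rw [coeff_imageSum, coeff_imageSum_univ_sub_one]
  split_ifs with hd
  · simpa [hd] using h₀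
  · simpa [card_eq_one_iff_existsUnique] using h d hd

end GroupRing

section IntegerValued

variable {ι : Type*}

lemma eq_zero_or_eq_one_of_sum_sq_eq_sum {s : Finset ι} {f : ι → ℤ} (hf : ∀ i ∈ s, 0 ≤ f i)
    (h : ∑ i ∈ s, f i ^ 2 = ∑ i ∈ s, f i) : ∀ i ∈ s, f i = 0 ∨ f i = 1 := by
  have hterm : ∀ i ∈ s, 0 ≤ f i * (f i - 1) := fun i hi => by
    rcases (hf i hi).eq_or_lt with h0 | hpos
    · simp [← h0]
    · exact mul_nonneg hpos.le (by omega)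
  have hzero : ∑ i ∈ s, f i * (f i - 1) = 0 := by
    simp only [mul_sub, mul_one, ← sq, sum_sub_distrib, h, sub_self]
  intro i hi
  rcases mul_eq_zero.mp ((sum_eq_zero_iff_of_nonneg hterm).mp hzero i hi) with h0 | h1
  · exact Or.inl h0
  · exact Or.inr (by omega)

lemma exists_eq_ite_of_sum_sq_eq_sum [Fintype ι] [DecidableEq ι] {f : ι → ℤ} (hf : ∀ i, 0 ≤ f i)
    (hsq : ∑ i, f i ^ 2 = ∑ i, f i) (hsum : ∑ i, f i = Fintype.card ι - 1) :
    ∃ z, ∀ i, f i = if i = z then 0 else 1 := by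
  have h01 := eq_zero_or_eq_one_of_sum_sq_eq_sum (fun i _ => hf i) hsq
  have hcount : ∑ i, f i = #{i | ¬f i = 0} := by
    rw [card_filter]
    push_cast
    refine sum_congr rfl fun i hi => ?_
    rcases h01 i hi with h | h <;> simp [h]
  have hzeros : #{i | f i = 0} = 1 := by
    have := card_filter_add_card_filter_not (s := univ) (fun i => f i = 0)
    rw [card_univ] at this
    have : (#{i | ¬f i = 0} : ℤ) = Fintype.card ι - 1 := hcount ▸ hsum
    omega
  obtain ⟨z, hz⟩ := card_eq_one.mp hzeros
  refine ⟨z, fun i => ?_⟩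
  have hi : f i = 0 ↔ i = z := by simpa using congr(i ∈ $hz)
  split_ifs with h
  · exact hi.mpr h
  · exact (h01 i (mem_univ i)).resolve_left (mt hi.mp h)

end IntegerValued

lemma eq_mul_of_mul_eq_sub {R : Type*} [CommRing R] {α α' β σ u : R} (h₁ : α' * β = σ - 1)
    (h₂ : α * β = σ - u) (hσ : α * σ = α' * σ) : α = u * α' := by
  linear_combination α * h₁ - α' * h₂ + hσ

section Reflection

variable {M : Type*} [AddCommGroup M] [DecidableEq M] [Fintype M] {A B : Finset M}

local notation "σ" => imageSum (univ : Finset M) id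

lemma coeff_zero_univ_sub_one_mul_self : ((σ - 1) * (σ - 1)).coeff 0 = Fintype.card M - 1 := by
  rw [show (σ - 1) * (σ - 1) = σ * σ - σ - σ + 1 by ring, imageSum_mul_imageSum_univ]
  simp [coeff_imageSum_univ, one_def, -nsmul_eq_mul]

lemma exists_imageSum_mul_eq_univ_sub_single
    (hAB : imageSum A id * imageSum B (-·) = σ - 1)
    (hBA : imageSum A (-·) * imageSum B id = σ - 1) :
    ∃ z, imageSum A id * imageSum B id = σ - single z 1 := by
  set s := imageSum A id * imageSum B id
  have hs : s = imageSum (A ×ˢ B) fun p => p.1 + p.2 := imageSum_mul A B id id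
  have hs' : imageSum A (-·) * imageSum B (-·) = imageSum (A ×ˢ B) fun p => -(p.1 + p.2) := by
    simp only [imageSum_mul, neg_add]
  have hsum : ∑ d, s.coeff d = Fintype.card M - 1 := calc
    ∑ d, s.coeff d = #(A ×ˢ B) := by rw [hs, sum_coeff_imageSum]
    _ = ∑ d, (imageSum A id * imageSum B (-·)).coeff d := by rw [imageSum_mul, sum_coeff_imageSum]
    _ = ∑ d : M, if d = 0 then 0 else 1 := by simp_rw [hAB, coeff_imageSum_univ_sub_one]
    _ = Fintype.card M - 1 := by simp [sum_ite, filter_ne', Nat.cast_sub Fintype.card_pos]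
  have hsq : ∑ d, s.coeff d ^ 2 = ∑ d, s.coeff d := calc
    ∑ d, s.coeff d ^ 2 = (s * (imageSum A (-·) * imageSum B (-·))).coeff 0 := by
      rw [hs', hs, coeff_zero_imageSum_mul_neg]
    _ = ((imageSum A id * imageSum B (-·)) * (imageSum A (-·) * imageSum B id)).coeff 0 := by
      congr 2
      ring
    _ = ((σ - 1) * (σ - 1)).coeff 0 := by rw [hAB, hBA]
    _ = ∑ d, s.coeff d := by rw [coeff_zero_univ_sub_one_mul_self, hsum]
  have hnonneg (d : M) : 0 ≤ s.coeff d := by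
    rw [hs, coeff_imageSum]
    positivity
  obtain ⟨z, hz⟩ := exists_eq_ite_of_sum_sq_eq_sum hnonneg hsq hsum
  refine ⟨z, ?_⟩
  ext d
  by_cases hd : d = z <;> simp [hz, hd, coeff_imageSum_univ]

theorem exists_image_sub_eq_of_imageSum_mul_eq_univ_sub_one
    (hAB : imageSum A id * imageSum B (-·) = σ - 1)
    (hBA : imageSum A (-·) * imageSum B id = σ - 1) :
    ∃ z, A.image (z - ·) = A ∧ B.image (z - ·) = B := by
  obtain ⟨z, hz⟩ := exists_imageSum_mul_eq_univ_sub_single hAB hBA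
  have hσ (S : Finset M) : imageSum S id * σ = imageSum S (-·) * σ := by
    simp only [imageSum_mul_imageSum_univ]
  have hreflect (S : Finset M) (hS : imageSum S id = single z 1 * imageSum S (-·)) :
      S.image (z - ·) = S := by
    apply imageSum_id_injective
    dsimp only
    rw [imageSum_image sub_right_injective.injOn, hS, single_mul_imageSum]
    simp only [sub_eq_add_neg]
  refine ⟨z, hreflect A (eq_mul_of_mul_eq_sub hBA hz (hσ A)), hreflect B ?_⟩
  rw [mul_comm] at hAB hz
  exact eq_mul_of_mul_eq_sub hAB hz (hσ B)

theorem exists_image_sub_eq_of_existsUnique_sub (hdisj : Disjoint A B)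
    (hAB : ∀ d ≠ 0, ∃! p : M × M, p.1 ∈ A ∧ p.2 ∈ B ∧ p.1 - p.2 = d)
    (hBA : ∀ d ≠ 0, ∃! p : M × M, p.1 ∈ A ∧ p.2 ∈ B ∧ p.2 - p.1 = d) :
    ∃ z, A.image (z - ·) = A ∧ B.image (z - ·) = B := by
  have hne : ∀ p ∈ A ×ˢ B, p.1 ≠ p.2 := fun p hp heq =>
    disjoint_left.mp hdisj (mem_product.mp hp).1 (heq ▸ (mem_product.mp hp).2)
  apply exists_image_sub_eq_of_imageSum_mul_eq_univ_sub_one <;> rw [imageSum_mul] <;>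
    apply imageSum_eq_univ_sub_one
  · simpa [← sub_eq_add_neg, sub_eq_zero] using hne
  · simpa [← sub_eq_add_neg, and_assoc] using hAB
  · simpa [neg_add_eq_sub, sub_eq_zero, eq_comm] using hne
  · simpa [neg_add_eq_sub, and_assoc] using hBA

end Reflection

section Symmetry

variable {M : Type*} [AddCommGroup M] [DecidableEq M] {A : Finset M}

lemma sum_add_sum_eq_card_nsmul_of_image_sub_eq {z : M} (hA : A.image (z - ·) = A) :
    ∑ x ∈ A, x + ∑ x ∈ A, x = #A • z := by
  conv_lhs => arg 2; rw [← hA]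
  rw [sum_image sub_right_injective.injOn, sum_sub_distrib, sum_const]
  abel

lemma image_neg_image_add_eq_of_image_sub_eq {g : M} (hA : A.image (-(g + g) - ·) = A) :
    (A.image (g + ·)).image (fun x => -x) = A.image (g + ·) := by
  conv_rhs => rw [← hA]
  simp only [image_image]
  congr 1
  funext x
  simp only [Function.comp_apply]
  abel

end Symmetry

theorem stmt_17_general (a : ℕ) (A B : Finset (ZMod (a ^ 2 + 1)))
    (h : IsSEDF (a ^ 2 + 1) a A B) :
    ∃ g : ZMod (a ^ 2 + 1),
      (A.image (fun x => g + x)).image (fun x => -x) = A.image (fun x => g + x) ∧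
      (B.image (fun x => g + x)).image (fun x => -x) = B.image (fun x => g + x) := by
  obtain ⟨hdisj, hcardA, -, hAB, hBA⟩ := h
  obtain ⟨z, hzA, hzB⟩ := exists_image_sub_eq_of_existsUnique_sub hdisj hAB hBA
  have ha : (a : ZMod (a ^ 2 + 1)) ^ 2 = -1 := by
    have : ((a ^ 2 + 1 : ℕ) : ZMod (a ^ 2 + 1)) = 0 := ZMod.natCast_self _
    push_cast at this
    linear_combination this
  set g : ZMod (a ^ 2 + 1) := (a : ZMod (a ^ 2 + 1)) * ∑ x ∈ A, x with hg
  have hz : z = -(g + g) := by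
    have hsum := sum_add_sum_eq_card_nsmul_of_image_sub_eq hzA
    rw [hcardA, nsmul_eq_mul] at hsum
    linear_combination (a : ZMod (a ^ 2 + 1)) * hsum + z * ha - 2 * hg
  rw [hz] at hzA hzB
  exact ⟨g, image_neg_image_add_eq_of_image_sub_eq hzA, image_neg_image_add_eq_of_image_sub_eq hzB⟩

theorem stmt_17 (a : ℕ) (ha : 0 < a) (A B : Finset (ZMod (a ^ 2 + 1)))
    (h : IsSEDF (a ^ 2 + 1) a A B) :
    ∃ g : ZMod (a ^ 2 + 1),
      (A.image (fun x => g + x)).image (fun x => -x) = A.image (fun x => g + x) ∧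
      (B.image (fun x => g + x)).image (fun x => -x) = B.image (fun x => g + x) :=
  stmt_17_general a A B h
end

section
/- Let k ≥ 3 be an odd integer and let n = (k²+1)/2, so that 2n − 1 = k². In the dihedral group D_n of order 2n = k²+1 with generators a, b satisfying a² = 1, bⁿ = 1, and aba = b⁻¹, define the subsets A = {bⁱ : 1 ≤ i ≤ (k−1)/2} ∪ {abⁱ : 0 ≤ i ≤ (k−1)/2}, B = {b^{ik} : 0 ≤ i ≤ (k−1)/2} ∪ {ab^{ik} : 1 ≤ i ≤ (k−1)/2}, A₁ = {bⁱ : 0 ≤ i ≤ (k−1)/2} ∪ {abⁱ : 0 ≤ i ≤ (k−3)/2}, and A₂ = {b^{ik} : 1 ≤ i ≤ (k−1)/2} ∪ {ab^{ik+(k−1)/2} : 0 ≤ i ≤ (k−1)/2}. Then, with h = ab^{(k−1)/2}, one has A₁h = A and (A₂h)⁻¹ = h⁻¹A₂⁻¹ = B; consequently the near factorization (A, B) of D_n and the pair (A₁, A₂⁻¹) (arising from the (k²+1, 2, k, 1)-SEDF (A₁, A₂)) are equivalent near factorizations. -/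
open DihedralGroup

/-- The set `A = {b^i : 1 ≤ i ≤ (k-1)/2} ∪ {a b^i : 0 ≤ i ≤ (k-1)/2}` in the dihedral group
`D_{(k²+1)/2}`, where `b^i` is `r i` and `a b^i` is `sr i`. -/
def dihA (k : ℕ) : Finset (DihedralGroup ((k ^ 2 + 1) / 2)) :=
  (Finset.Icc 1 ((k - 1) / 2)).image (fun i : ℕ => r (i : ZMod ((k ^ 2 + 1) / 2))) ∪
  (Finset.Icc 0 ((k - 1) / 2)).image (fun i : ℕ => sr (i : ZMod ((k ^ 2 + 1) / 2)))

/-- The set `B = {b^{ik} : 0 ≤ i ≤ (k-1)/2} ∪ {a b^{ik} : 1 ≤ i ≤ (k-1)/2}`. -/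
def dihB (k : ℕ) : Finset (DihedralGroup ((k ^ 2 + 1) / 2)) :=
  (Finset.Icc 0 ((k - 1) / 2)).image (fun i : ℕ => r ((i * k : ℕ) : ZMod ((k ^ 2 + 1) / 2))) ∪
  (Finset.Icc 1 ((k - 1) / 2)).image (fun i : ℕ => sr ((i * k : ℕ) : ZMod ((k ^ 2 + 1) / 2)))

/-- The set `A₁ = {b^i : 0 ≤ i ≤ (k-1)/2} ∪ {a b^i : 0 ≤ i ≤ (k-3)/2}`. -/
def dihA1 (k : ℕ) : Finset (DihedralGroup ((k ^ 2 + 1) / 2)) :=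
  (Finset.Icc 0 ((k - 1) / 2)).image (fun i : ℕ => r (i : ZMod ((k ^ 2 + 1) / 2))) ∪
  (Finset.Icc 0 ((k - 3) / 2)).image (fun i : ℕ => sr (i : ZMod ((k ^ 2 + 1) / 2)))

/-- The set `A₂ = {b^{ik} : 1 ≤ i ≤ (k-1)/2} ∪ {a b^{ik+(k-1)/2} : 0 ≤ i ≤ (k-1)/2}`. -/
def dihA2 (k : ℕ) : Finset (DihedralGroup ((k ^ 2 + 1) / 2)) :=
  (Finset.Icc 1 ((k - 1) / 2)).image (fun i : ℕ => r ((i * k : ℕ) : ZMod ((k ^ 2 + 1) / 2))) ∪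
  (Finset.Icc 0 ((k - 1) / 2)).image
    (fun i : ℕ => sr ((i * k + (k - 1) / 2 : ℕ) : ZMod ((k ^ 2 + 1) / 2)))

/-- `(S, T)` is a near factorization of the group `G`: every element of `G` other than the
identity is expressed exactly once as a product `s * t` with `s ∈ S`, `t ∈ T`, and the
identity is never so expressed. -/
def IsNearFactorization {G : Type*} [Group G] (S T : Finset G) : Prop :=
  (∀ s ∈ S, ∀ t ∈ T, s * t ≠ 1) ∧
  (∀ g : G, g ≠ 1 → ∃! p : G × G, p.1 ∈ S ∧ p.2 ∈ T ∧ p.1 * p.2 = g)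

/-!
Write `k = 2m + 1`, so that `n = (k² + 1) / 2 = mk + m + 1`, and write an exponent `v < n` as
`v = t + qk` with `0 ≤ t < k`, `q ≤ m`. Then `b^v` is `b^t · b^{qk}` (`1 ≤ t ≤ m`), `a · ab^{qk}`
(`t = 0`) or `ab^{k-t} · ab^{(q+1)k}` (`t > m`), and `ab^v` is `ab^t · b^{qk}` (`t ≤ m`) or
`b^{k-t} · ab^{(q+1)k}` (`t > m`). So `AB` covers `D_n \ {1}`, and since
`|A| |B| ≤ k² = |D_n| - 1` every product is unique and none is `1`.
The identities `A₁h = A` and `h⁻¹A₂⁻¹ = B` are direct computations, the second one resting on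
`(m + 1)k ≡ m (mod n)`; they make `(A₁, A₂⁻¹)` a translate of `(A, B)`.
-/

open Finset

section NearFactorization

variable {G : Type*} [Group G] [DecidableEq G] {S T : Finset G}

theorem IsNearFactorization.of_card_lt [Fintype G] (hcard : #S * #T < Fintype.card G)
    (hcover : ∀ g : G, g ≠ 1 → ∃ s ∈ S, ∃ t ∈ T, s * t = g) : IsNearFactorization S T := by
  set P := (S ×ˢ T).image (fun p => p.1 * p.2)
  have hmem : ∀ s ∈ S, ∀ t ∈ T, s * t ∈ P := fun s hs t ht =>
    mem_image.2 ⟨(s, t), mem_product.2 ⟨hs, ht⟩, rfl⟩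
  have hsub : univ.erase 1 ⊆ P := fun g hg => by
    obtain ⟨s, hs, t, ht, rfl⟩ := hcover g (ne_of_mem_erase hg)
    exact hmem s hs t ht
  have hP : #P ≤ #S * #T := card_image_le.trans (card_product S T).le
  have hone : 1 ∉ P := fun h1 => by
    have : univ ⊆ P := by rw [← insert_erase (mem_univ (1 : G))]; exact insert_subset h1 hsub
    have := card_le_card this
    rw [card_univ] at this
    omega
  have hinj : Set.InjOn (fun p : G × G => p.1 * p.2) (S ×ˢ T) := by
    rw [← coe_product, ← card_image_iff]
    show #P = #(S ×ˢ T)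
    have := card_le_card hsub
    rw [card_erase_of_mem (mem_univ _), card_univ] at this
    rw [card_product]
    omega
  refine ⟨fun s hs t ht h1 => hone (h1 ▸ hmem s hs t ht), fun g hg => ?_⟩
  obtain ⟨s, hs, t, ht, rfl⟩ := hcover g hg
  exact ⟨(s, t), ⟨hs, ht, rfl⟩, fun p ⟨hp1, hp2, hp⟩ =>
    hinj ⟨hp1, hp2⟩ ⟨hs, ht⟩ hp⟩

theorem IsNearFactorization.of_image_mul_right (x : G)
    (h : IsNearFactorization (S.image (· * x)) (T.image (x⁻¹ * ·))) :
    IsNearFactorization S T := by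
  obtain ⟨hne, huniq⟩ := h
  have hmul : ∀ s t : G, s * x * (x⁻¹ * t) = s * t := fun s t => by group
  refine ⟨fun s hs t ht => hmul s t ▸ hne _ (mem_image_of_mem _ hs) _ (mem_image_of_mem _ ht),
    fun g hg => ?_⟩
  obtain ⟨⟨_, _⟩, ⟨hsx, htx, rfl⟩, huniq⟩ := huniq g hg
  obtain ⟨s, hs, rfl⟩ := mem_image.1 hsx
  obtain ⟨t, ht, rfl⟩ := mem_image.1 htx
  refine ⟨(s, t), ⟨hs, ht, (hmul s t).symm⟩, fun ⟨s₂, t₂⟩ ⟨hs₂, ht₂, hst₂⟩ => ?_⟩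
  have := huniq (s₂ * x, x⁻¹ * t₂)
    ⟨mem_image_of_mem _ hs₂, mem_image_of_mem _ ht₂, (hmul s₂ t₂).trans hst₂⟩
  simp_all

end NearFactorization

section DihedralConstruction

variable {k m : ℕ}

lemma r_mem_dihA {i : ℕ} (h₁ : 1 ≤ i) (h₂ : i ≤ (k - 1) / 2) :
    r (i : ZMod ((k ^ 2 + 1) / 2)) ∈ dihA k :=
  mem_union_left _ (mem_image_of_mem _ (mem_Icc.2 ⟨h₁, h₂⟩))

lemma sr_mem_dihA {i : ℕ} (h : i ≤ (k - 1) / 2) : sr (i : ZMod ((k ^ 2 + 1) / 2)) ∈ dihA k :=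
  mem_union_right _ (mem_image_of_mem _ (mem_Icc.2 ⟨i.zero_le, h⟩))

lemma r_mem_dihB {j : ℕ} (h : j ≤ (k - 1) / 2) :
    r ((j * k : ℕ) : ZMod ((k ^ 2 + 1) / 2)) ∈ dihB k :=
  mem_union_left _ (mem_image_of_mem _ (mem_Icc.2 ⟨j.zero_le, h⟩))

lemma sr_mem_dihB {j : ℕ} (h₁ : 1 ≤ j) (h₂ : j ≤ (k - 1) / 2) :
    sr ((j * k : ℕ) : ZMod ((k ^ 2 + 1) / 2)) ∈ dihB k :=
  mem_union_right _ (mem_image_of_mem _ (mem_Icc.2 ⟨h₁, h₂⟩))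

lemma card_dihA_le : #(dihA k) ≤ 2 * ((k - 1) / 2) + 1 := by
  refine (card_union_le _ _).trans ?_
  grw [card_image_le, card_image_le, Nat.card_Icc, Nat.card_Icc]
  omega

lemma card_dihB_le : #(dihB k) ≤ 2 * ((k - 1) / 2) + 1 := by
  refine (card_union_le _ _).trans ?_
  grw [card_image_le, card_image_le, Nat.card_Icc, Nat.card_Icc]
  omega

lemma sq_add_one_div_two_of_eq (hm : k = 2 * m + 1) : (k ^ 2 + 1) / 2 = m * k + m + 1 := by
  subst hm
  ring_nf
  omega

lemma exists_eq_add_mul_of_le (hm : k = 2 * m + 1) {v : ℕ} (hv : v ≤ m * k + m) :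
    ∃ t q, v = t + q * k ∧ t < k ∧ q ≤ m ∧ (m < t → q < m) := by
  have hq : v / k ≤ m := Nat.lt_succ_iff.1 <| (Nat.div_lt_iff_lt_mul (by omega)).2 <| by
    rw [Nat.succ_mul]; omega
  refine ⟨v % k, v / k, (Nat.mod_add_div' v k).symm, Nat.mod_lt _ (by omega), hq, fun ht => ?_⟩
  rcases hq.lt_or_eq with hlt | heq
  · exact hlt
  · have := Nat.mod_add_div' v k
    rw [heq] at this
    omega

lemma natCast_succ_mul_sub {N t q : ℕ} (h : t ≤ k) :
    (((q + 1) * k : ℕ) : ZMod N) - ((k - t : ℕ) : ZMod N) = ((t + q * k : ℕ) : ZMod N) := by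
  rw [sub_eq_iff_eq_add, ← Nat.cast_add, Nat.succ_mul]
  congr 1
  omega

lemma exists_mul_eq_r (hm : k = 2 * m + 1) {v : ℕ} (hv₀ : 0 < v) (hv : v ≤ m * k + m) :
    ∃ a ∈ dihA k, ∃ b ∈ dihB k, a * b = r (v : ZMod ((k ^ 2 + 1) / 2)) := by
  have hM : (k - 1) / 2 = m := by omega
  obtain ⟨t, q, rfl, htk, hq, hqt⟩ := exists_eq_add_mul_of_le hm hv
  rcases Nat.eq_zero_or_pos t with rfl | ht₀
  · have hq₀ : 1 ≤ q := Nat.pos_of_ne_zero fun h => by simp [h] at hv₀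
    refine ⟨sr ((0 : ℕ) : ZMod _), sr_mem_dihA (by omega), _, sr_mem_dihB hq₀ (by omega), ?_⟩
    simp [sr_mul_sr]
  by_cases htm : t ≤ m
  · refine ⟨r (t : ZMod _), r_mem_dihA ht₀ (by omega), _, r_mem_dihB (j := q) (by omega), ?_⟩
    rw [r_mul_r, Nat.cast_add]
  · refine ⟨sr ((k - t : ℕ) : ZMod _), sr_mem_dihA (by omega),
      _, sr_mem_dihB (j := q + 1) (by omega) (by omega), ?_⟩
    rw [sr_mul_sr, natCast_succ_mul_sub htk.le]

lemma exists_mul_eq_sr (hm : k = 2 * m + 1) {v : ℕ} (hv : v ≤ m * k + m) :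
    ∃ a ∈ dihA k, ∃ b ∈ dihB k, a * b = sr (v : ZMod ((k ^ 2 + 1) / 2)) := by
  have hM : (k - 1) / 2 = m := by omega
  obtain ⟨t, q, rfl, htk, hq, hqt⟩ := exists_eq_add_mul_of_le hm hv
  by_cases htm : t ≤ m
  · refine ⟨sr (t : ZMod _), sr_mem_dihA (by omega), _, r_mem_dihB (j := q) (by omega), ?_⟩
    rw [sr_mul_r, Nat.cast_add]
  · refine ⟨r ((k - t : ℕ) : ZMod _), r_mem_dihA (by omega) (by omega),
      _, sr_mem_dihB (j := q + 1) (by omega) (by omega), ?_⟩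
    rw [r_mul_sr, natCast_succ_mul_sub htk.le]

lemma exists_mem_dihA_mem_dihB_mul_eq (hm : k = 2 * m + 1) (g : DihedralGroup ((k ^ 2 + 1) / 2))
    (hg : g ≠ 1) : ∃ a ∈ dihA k, ∃ b ∈ dihB k, a * b = g := by
  have hN := sq_add_one_div_two_of_eq hm
  have : NeZero ((k ^ 2 + 1) / 2) := ⟨by omega⟩
  have hval : ∀ c : ZMod ((k ^ 2 + 1) / 2), c.val ≤ m * k + m := fun c => by
    have := ZMod.val_lt c
    omega
  rcases g with c | c <;> rw [← ZMod.natCast_zmod_val c]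
  · refine exists_mul_eq_r hm (Nat.pos_of_ne_zero fun h => hg ?_) (hval c)
    rw [ZMod.val_eq_zero] at h
    rw [h, one_def]
  · exact exists_mul_eq_sr hm (hval c)

theorem isNearFactorization_dihA_dihB (hm : k = 2 * m + 1) :
    IsNearFactorization (dihA k) (dihB k) := by
  have hN := sq_add_one_div_two_of_eq hm
  have : NeZero ((k ^ 2 + 1) / 2) := ⟨by omega⟩
  refine .of_card_lt ?_ (exists_mem_dihA_mem_dihB_mul_eq hm)
  have hM : 2 * ((k - 1) / 2) + 1 = k := by omega
  calc #(dihA k) * #(dihB k) ≤ k * k := by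
        grw [card_dihA_le, card_dihB_le, hM]
    _ < Fintype.card (DihedralGroup ((k ^ 2 + 1) / 2)) := by
        rw [DihedralGroup.card, hN, hm]
        ring_nf
        omega

lemma image_dihA1_mul_sr (hk : 3 ≤ k) :
    (dihA1 k).image (· * sr (((k - 1) / 2 : ℕ) : ZMod ((k ^ 2 + 1) / 2))) = dihA k := by
  set M := (k - 1) / 2
  have hM : (k - 3) / 2 = M - 1 := by omega
  ext g
  simp only [dihA1, dihA, image_union, image_image, Function.comp_def, mem_union, mem_image,
    mem_Icc, hM, r_mul_sr, sr_mul_sr, zero_le, true_and]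
  constructor
  · rintro (⟨i, hi, rfl⟩ | ⟨i, hi, rfl⟩)
    · exact .inr ⟨M - i, by omega, by rw [Nat.cast_sub hi]⟩
    · exact .inl ⟨M - i, by omega, by rw [Nat.cast_sub (by omega)]⟩
  · rintro (⟨i, hi, rfl⟩ | ⟨i, hi, rfl⟩)
    · exact .inr ⟨M - i, by omega, by rw [Nat.cast_sub (by omega), sub_sub_cancel]⟩
    · exact .inl ⟨M - i, by omega, by rw [Nat.cast_sub hi, sub_sub_cancel]⟩

lemma image_inv_mul_image_inv_dihA2 (hm : k = 2 * m + 1) :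
    ((dihA2 k).image (·⁻¹)).image ((sr (((k - 1) / 2 : ℕ) : ZMod ((k ^ 2 + 1) / 2)))⁻¹ * ·) =
      dihB k := by
  have hM : (k - 1) / 2 = m := by omega
  have hkey : ((m : ZMod ((k ^ 2 + 1) / 2)) + 1) * k = m := by
    have h := congrArg (Nat.cast : ℕ → ZMod ((k ^ 2 + 1) / 2))
      (show (m + 1) * k = (k ^ 2 + 1) / 2 + m by rw [sq_add_one_div_two_of_eq hm]; subst hm; ring)
    push_cast [ZMod.natCast_self] at h
    simpa using h
  ext g
  simp only [dihA2, dihB, image_union, image_image, Function.comp_def, mem_union, mem_image,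
    mem_Icc, hM, inv_sr, inv_r, sr_mul_r, sr_mul_sr, zero_le, true_and]
  constructor
  · rintro (⟨j, hj, rfl⟩ | ⟨j, hj, rfl⟩)
    · refine .inr ⟨m + 1 - j, by omega, congrArg sr ?_⟩
      push_cast [Nat.cast_sub (by omega : j ≤ m + 1)]
      linear_combination hkey
    · exact .inl ⟨j, hj, congrArg _ (by push_cast; ring)⟩
  · rintro (⟨j, hj, rfl⟩ | ⟨j, hj, rfl⟩)
    · exact .inr ⟨j, hj, congrArg _ (by push_cast; ring)⟩
    · refine .inl ⟨m + 1 - j, by omega, congrArg sr ?_⟩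
      push_cast [Nat.cast_sub (by omega : j ≤ m + 1)]
      linear_combination -hkey

end DihedralConstruction

theorem stmt_19 (k : ℕ) (hk : 3 ≤ k) (hodd : Odd k) :
    ∀ h : DihedralGroup ((k ^ 2 + 1) / 2),
      h = sr ((((k - 1) / 2 : ℕ)) : ZMod ((k ^ 2 + 1) / 2)) →
      ((dihA1 k).image (fun g => g * h) = dihA k) ∧
      (((dihA2 k).image (fun g => g * h)).image (fun g => g⁻¹) = dihB k) ∧
      (((dihA2 k).image (fun g => g⁻¹)).image (fun g => h⁻¹ * g) = dihB k) ∧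
      IsNearFactorization (dihA k) (dihB k) ∧
      IsNearFactorization (dihA1 k) ((dihA2 k).image (fun g => g⁻¹)) ∧
      (∃ g₀ h₀ : DihedralGroup ((k ^ 2 + 1) / 2),
        dihA k = (dihA1 k).image (fun s => g₀ * s * h₀) ∧
        dihB k = ((dihA2 k).image (fun g => g⁻¹)).image (fun t => h₀⁻¹ * t * g₀⁻¹)) := by
  rintro h rfl
  obtain ⟨m, hm⟩ := hodd
  have hA := image_dihA1_mul_sr hk
  have hB := image_inv_mul_image_inv_dihA2 hm
  have hAB := isNearFactorization_dihA_dihB hm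
  refine ⟨hA, ?_, hB, hAB, ?_, 1, sr (((k - 1) / 2 : ℕ) : ZMod _), ?_, ?_⟩
  · rw [← hB, image_image, image_image]
    simp only [Function.comp_def, mul_inv_rev]
  · rw [← hA, ← hB] at hAB
    exact hAB.of_image_mul_right _
  · simp only [one_mul, hA]
  · simp only [inv_one, mul_one, hB]
end
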